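/- arXiv:1408.6713 — 9 statements merged into one kernel-verified Lean document; each statement's English description precedes it below -/
import Mathlib

section
/- A negative function f of a graph G is maximal if and only if for every vertex v with f(v) = -1, there exists a vertex u in the closed neighborhood N[v] such that f(N[u]) = 0 or f(N[u]) = 1. -/
open Finset

/-- The closed neighborhood N[v] as a Finset. -/
def SimpleGraph.closedNbr {V : Type*} [Fintype V] [DecidableEq V] (G : SimpleGraph V)
    [DecidableRel G.Adj] (v : V) : Finset V :=
  insert v (G.neighborFinset v)

/-- A function f : V → {-1,1} is negative if f(N[v]) ≤ 1 for every vertex v. -/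
def SimpleGraph.NegativeFn {V : Type*} [Fintype V] [DecidableEq V] (G : SimpleGraph V)
    [DecidableRel G.Adj] (f : V → ℤ) : Prop :=
  (∀ v, f v = -1 ∨ f v = 1) ∧ ∀ v : V, ∑ u ∈ G.closedNbr v, f u ≤ 1

/-- A negative function is maximal if no negative function g ≠ f satisfies g ≥ f pointwise. -/
def SimpleGraph.MaximalNegativeFn {V : Type*} [Fintype V] [DecidableEq V] (G : SimpleGraph V)
    [DecidableRel G.Adj] (f : V → ℤ) : Prop :=
  G.NegativeFn f ∧ ∀ g : V → ℤ, G.NegativeFn g → (∀ v, f v ≤ g v) → g = f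

theorem stmt_0 {V : Type*} [Fintype V] [DecidableEq V] (G : SimpleGraph V) [DecidableRel G.Adj]
    (f : V → ℤ) (hf : G.NegativeFn f) :
    G.MaximalNegativeFn f ↔
      ∀ v : V, f v = -1 → ∃ u ∈ G.closedNbr v,
        (∑ w ∈ G.closedNbr u, f w = 0 ∨ ∑ w ∈ G.closedNbr u, f w = 1) := by
  have hmem : ∀ u v : V, u ∈ G.closedNbr v ↔ v ∈ G.closedNbr u := by
    intro u v
    simp only [SimpleGraph.closedNbr, mem_insert, SimpleGraph.mem_neighborFinset]
    constructor
    · rintro (rfl | h); · exact Or.inl rfl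
      · exact Or.inr h.symm
    · rintro (rfl | h); · exact Or.inl rfl
      · exact Or.inr h.symm
  constructor
  · rintro ⟨-, hmax⟩ v hv
    by_contra hc
    push_neg at hc
    -- every u ∈ N[v] has f(N[u]) ≤ -1
    have hle : ∀ u ∈ G.closedNbr v, ∑ w ∈ G.closedNbr u, f w ≤ -1 := by
      intro u hu
      have h1 := hf.2 u
      have := hc u hu
      omega
    set g : V → ℤ := Function.update f v 1 with hg
    have hgge : ∀ w, f w ≤ g w := by
      intro w
      by_cases hw : w = v
      · subst hw; simp [hg, hv]
      · simp [hg, Function.update_of_ne hw]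
    have hgsum : ∀ w, ∑ u ∈ G.closedNbr w, g u ≤ (∑ u ∈ G.closedNbr w, f u) + 2 := by
      intro w
      have : ∑ u ∈ G.closedNbr w, (g u - f u) ≤ 2 := by
        by_cases hvw : v ∈ G.closedNbr w
        · rw [← Finset.sum_erase_add _ _ hvw]
          have h1 : ∑ u ∈ (G.closedNbr w).erase v, (g u - f u) = 0 := by
            apply Finset.sum_eq_zero
            intro x hx
            have : x ≠ v := (Finset.mem_erase.mp hx).1
            simp [hg, Function.update_of_ne this]
          rw [h1]
          simp [hg, hv]
        · have : ∑ u ∈ G.closedNbr w, (g u - f u) = 0 := by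
            apply Finset.sum_eq_zero
            intro x hx
            have : x ≠ v := fun h => hvw (h ▸ hx)
            simp [hg, Function.update_of_ne this]
          omega
      have hs : ∑ u ∈ G.closedNbr w, (g u - f u) =
          (∑ u ∈ G.closedNbr w, g u) - ∑ u ∈ G.closedNbr w, f u :=
        Finset.sum_sub_distrib _ _
      omega
    have hgneg : G.NegativeFn g := by
      constructor
      · intro w
        by_cases hw : w = v
        · subst hw; simp [hg]
        · simpa [hg, Function.update_of_ne hw] using hf.1 w
      · intro w
        by_cases hvw : v ∈ G.closedNbr w
        · have hw : w ∈ G.closedNbr v := (hmem w v).mpr hvw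
          have := hle w hw
          have := hgsum w
          omega
        · have : ∑ u ∈ G.closedNbr w, g u = ∑ u ∈ G.closedNbr w, f u := by
            apply Finset.sum_congr rfl
            intro x hx
            have : x ≠ v := fun h => hvw (h ▸ hx)
            simp [hg, Function.update_of_ne this]
          have := hf.2 w
          omega
    have := congrFun (hmax g hgneg hgge) v
    simp [hg] at this
    omega
  · intro h
    refine ⟨hf, fun g hg hge => ?_⟩
    by_contra hne
    have : ∃ v, g v ≠ f v := by
      by_contra hc
      push_neg at hc
      exact hne (funext hc)
    obtain ⟨v, hv⟩ := this
    have hfv : f v = -1 := by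
      have h3 := hge v
      rcases hf.1 v with h1 | h1 <;> rcases hg.1 v with h2 | h2 <;> omega
    have hgv : g v = 1 := by
      rcases hg.1 v with h2 | h2
      · exact absurd (h2.trans hfv.symm) hv
      · exact h2
    obtain ⟨u, hu, hsum⟩ := h v hfv
    have hvu : v ∈ G.closedNbr u := (hmem v u).mpr hu
    -- g sum over N[u] ≥ f sum + 2
    have key : (∑ w ∈ G.closedNbr u, f w) + 2 ≤ ∑ w ∈ G.closedNbr u, g w := by
      have h1 : ∑ w ∈ G.closedNbr u, f w =
          (∑ w ∈ (G.closedNbr u).erase v, f w) + f v :=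
        (Finset.sum_erase_add _ _ hvu).symm
      have h2 : ∑ w ∈ G.closedNbr u, g w =
          (∑ w ∈ (G.closedNbr u).erase v, g w) + g v :=
        (Finset.sum_erase_add _ _ hvu).symm
      have h3 : ∑ w ∈ (G.closedNbr u).erase v, f w ≤
          ∑ w ∈ (G.closedNbr u).erase v, g w :=
        Finset.sum_le_sum fun x _ => hge x
      omega
    have := hg.2 u
    omega
end

section
/- Let f be a maximal negative function on a finite simple graph G with maximum degree Δ. Let M = {v : f(v) = -1}, P = {v : f(v) = 1}, and for 0 ≤ i, let Aᵢ = {v ∈ M : v has exactly i neighbors in P} with aᵢ = |Aᵢ|. Then a₀ ≤ Σ_{i≥1} (i-1)·aᵢ. -/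
open Finset

theorem stmt_5 {V : Type*} [Fintype V] [DecidableEq V] (G : SimpleGraph V) [DecidableRel G.Adj]
    (f : V → ℤ) (hf : G.MaximalNegativeFn f)
    (A : ℕ → Finset V)
    (hA : ∀ i, A i = univ.filter
      (fun v => f v = -1 ∧ ((G.neighborFinset v).filter (fun u => f u = 1)).card = i)) :
    (A 0).card ≤ ∑ i ∈ Finset.Icc 1 (G.maxDegree + 1), (i - 1) * (A i).card := by
  classical
  obtain ⟨⟨hval, hsum⟩, hmax⟩ := hf
  have hmemc : ∀ u v : V, u ∈ G.closedNbr v ↔ v ∈ G.closedNbr u := by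
    intro u v
    simp only [SimpleGraph.closedNbr, mem_insert, SimpleGraph.mem_neighborFinset]
    constructor
    · rintro (h | h)
      · exact Or.inl h.symm
      · exact Or.inr h.symm
    · rintro (h | h)
      · exact Or.inl h.symm
      · exact Or.inr h.symm
  have hself : ∀ u : V, u ∈ G.closedNbr u := fun u => mem_insert_self _ _
  -- key existence from maximality
  have hexists : ∀ v : V, f v = -1 → ∃ u ∈ G.closedNbr v, 0 ≤ ∑ w ∈ G.closedNbr u, f w := by
    intro v hv
    by_contra hcon
    push_neg at hcon
    set g : V → ℤ := Function.update f v 1 with hg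
    have hgneg : G.NegativeFn g := by
      constructor
      · intro w
        by_cases hw : w = v
        · subst hw; right; simp [hg]
        · rw [hg, Function.update_of_ne hw]; exact hval w
      · intro u
        by_cases hvu : v ∈ G.closedNbr u
        · have h1 : ∑ w ∈ G.closedNbr u, g w = 1 + ∑ w ∈ (G.closedNbr u) \ {v}, f w := by
            rw [hg, Finset.sum_update_of_mem hvu]
          have h2 : ∑ w ∈ (G.closedNbr u) \ {v}, f w = (∑ w ∈ G.closedNbr u, f w) - f v := by
            rw [sdiff_singleton_eq_erase]
            have := Finset.add_sum_erase _ f hvu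
            omega
          have h3 : ∑ w ∈ G.closedNbr u, f w ≤ -1 := by
            have := hcon u ((hmemc u v).2 hvu)
            omega
          omega
        · have : ∑ w ∈ G.closedNbr u, g w = ∑ w ∈ G.closedNbr u, f w := by
            apply Finset.sum_congr rfl
            intro w hw
            rw [hg, Function.update_of_ne]
            rintro rfl; exact hvu hw
          rw [this]; exact hsum u
    have hge : ∀ w, f w ≤ g w := by
      intro w
      by_cases hw : w = v
      · subst hw; simp [hg, hv]
      · rw [hg, Function.update_of_ne hw]
    have := hmax g hgneg hge
    have : g v = f v := by rw [this]
    simp [hg, hv] at this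
  -- notation
  set B : Finset V := univ.filter (fun u => f u = -1 ∧ 0 ≤ ∑ w ∈ G.closedNbr u, f w) with hB
  set idx : V → ℕ := fun u => ((G.neighborFinset u).filter (fun w => f w = 1)).card with hidx
  -- counting lemma: for u ∈ B, #(nbrs with f=-1) + 1 ≤ idx u
  have hkey : ∀ u : V, f u = -1 → 0 ≤ ∑ w ∈ G.closedNbr u, f w →
      ((G.neighborFinset u).filter (fun w => f w = -1)).card + 1 ≤ idx u := by
    intro u hu hpos
    have hnotmem : u ∉ G.neighborFinset u := by
      simp [SimpleGraph.mem_neighborFinset]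
    have hsplitset : ∑ w ∈ G.closedNbr u, f w = f u + ∑ w ∈ G.neighborFinset u, f w := by
      rw [SimpleGraph.closedNbr, Finset.sum_insert hnotmem]
    have hfilter : (G.neighborFinset u).filter (fun w => ¬ f w = 1)
        = (G.neighborFinset u).filter (fun w => f w = -1) := by
      apply Finset.filter_congr
      intro w _
      rcases hval w with h | h <;> simp [h]
    have hnbrsum : ∑ w ∈ G.neighborFinset u, f w
        = (idx u : ℤ) - ((G.neighborFinset u).filter (fun w => f w = -1)).card := by
      rw [← Finset.sum_filter_add_sum_filter_not (G.neighborFinset u) (fun w => f w = 1)]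
      have h1 : ∑ w ∈ (G.neighborFinset u).filter (fun w => f w = 1), f w = (idx u : ℤ) := by
        rw [Finset.sum_congr rfl (fun w hw => (Finset.mem_filter.1 hw).2), Finset.sum_const,
          nsmul_eq_mul, mul_one, hidx]
      have h2 : ∑ w ∈ (G.neighborFinset u).filter (fun w => ¬ f w = 1), f w
          = -(((G.neighborFinset u).filter (fun w => f w = -1)).card : ℤ) := by
        rw [hfilter, Finset.sum_congr rfl (fun w hw => (Finset.mem_filter.1 hw).2),
          Finset.sum_const, nsmul_eq_mul, mul_neg_one]
      rw [h1, h2]; ring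
    rw [hsplitset, hu, hnbrsum] at hpos
    omega
  -- choose for each vertex of A 0 a good neighbor
  have hch : ∀ v : V, ∃ u : V, v ∈ A 0 → G.Adj v u ∧ u ∈ B := by
    intro v
    by_cases hv : v ∈ A 0
    · rw [hA 0, Finset.mem_filter] at hv
      obtain ⟨-, hv1, hv2⟩ := hv
      have hallneg : ∀ w ∈ G.neighborFinset v, f w = -1 := by
        intro w hw
        rcases hval w with h | h
        · exact h
        · exfalso
          have : w ∈ (G.neighborFinset v).filter (fun u => f u = 1) :=
            Finset.mem_filter.2 ⟨hw, h⟩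
          rw [Finset.card_eq_zero] at hv2
          rw [hv2] at this
          exact absurd this (Finset.notMem_empty w)
      obtain ⟨u, hu1, hu2⟩ := hexists v hv1
      rw [SimpleGraph.closedNbr, Finset.mem_insert] at hu1
      rcases hu1 with rfl | hu1
      · exfalso
        have hnotmem : u ∉ G.neighborFinset u := by
          simp [SimpleGraph.mem_neighborFinset]
        have hsplitset : ∑ w ∈ G.closedNbr u, f w = f u + ∑ w ∈ G.neighborFinset u, f w := by
          rw [SimpleGraph.closedNbr, Finset.sum_insert hnotmem]
        have : ∑ w ∈ G.neighborFinset u, f w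
            = -((G.neighborFinset u).card : ℤ) := by
          rw [Finset.sum_congr rfl hallneg, Finset.sum_const, nsmul_eq_mul, mul_neg_one]
        omega
      · refine ⟨u, fun _ => ⟨(SimpleGraph.mem_neighborFinset _ _ _).1 hu1, ?_⟩⟩
        rw [hB, Finset.mem_filter]
        exact ⟨Finset.mem_univ _, hallneg u hu1, hu2⟩
    · exact ⟨v, fun h => absurd h hv⟩
  choose φ hφ using hch
  -- fiberwise count over B
  have hmapsB : ∀ v ∈ A 0, φ v ∈ B := fun v hv => (hφ v hv).2
  rw [Finset.card_eq_sum_card_fiberwise hmapsB]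
  -- each fiber is small
  have hfiber : ∀ u ∈ B, ((A 0).filter (fun v => φ v = u)).card ≤ idx u - 1 := by
    intro u hu
    rw [hB, Finset.mem_filter] at hu
    obtain ⟨-, hu1, hu2⟩ := hu
    have hsub : (A 0).filter (fun v => φ v = u)
        ⊆ (G.neighborFinset u).filter (fun w => f w = -1) := by
      intro v hv
      rw [Finset.mem_filter] at hv
      obtain ⟨hv1, hv2⟩ := hv
      have hadj := (hφ v hv1).1
      rw [hv2] at hadj
      have hfv : f v = -1 := by
        rw [hA 0, Finset.mem_filter] at hv1
        exact hv1.2.1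
      exact Finset.mem_filter.2 ⟨(SimpleGraph.mem_neighborFinset _ _ _).2 hadj.symm, hfv⟩
    have h1 := Finset.card_le_card hsub
    have h2 := hkey u hu1 hu2
    omega
  calc ∑ u ∈ B, ((A 0).filter (fun v => φ v = u)).card
      ≤ ∑ u ∈ B, (idx u - 1) := Finset.sum_le_sum hfiber
    _ = ∑ i ∈ Finset.Icc 1 (G.maxDegree + 1), ∑ u ∈ B.filter (fun u => idx u = i),
        (idx u - 1) := by
        rw [Finset.sum_fiberwise_of_maps_to]
        intro u hu
        rw [hB, Finset.mem_filter] at hu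
        obtain ⟨-, hu1, hu2⟩ := hu
        have h2 := hkey u hu1 hu2
        have h3 : idx u ≤ G.maxDegree := by
          have : idx u ≤ (G.neighborFinset u).card := Finset.card_filter_le _ _
          have hd : (G.neighborFinset u).card = G.degree u := rfl
          have := G.degree_le_maxDegree u
          omega
        rw [Finset.mem_Icc]
        omega
    _ ≤ ∑ i ∈ Finset.Icc 1 (G.maxDegree + 1), (i - 1) * (A i).card := by
        apply Finset.sum_le_sum
        intro i hi
        have hsub : B.filter (fun u => idx u = i) ⊆ A i := by
          intro u hu
          rw [Finset.mem_filter, hB, Finset.mem_filter] at hu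
          rw [hA i, Finset.mem_filter]
          exact ⟨Finset.mem_univ _, hu.1.2.1, hu.2⟩
        calc ∑ u ∈ B.filter (fun u => idx u = i), (idx u - 1)
            = ∑ u ∈ B.filter (fun u => idx u = i), (i - 1) := by
              apply Finset.sum_congr rfl
              intro u hu
              rw [(Finset.mem_filter.1 hu).2]
          _ = (B.filter (fun u => idx u = i)).card * (i - 1) := by
              rw [Finset.sum_const, smul_eq_mul]
          _ ≤ (i - 1) * (A i).card := by
              rw [mul_comm]
              exact Nat.mul_le_mul_left _ (Finset.card_le_card hsub)
end

section
/- Let f be a maximal negative function on a finite simple graph G of order n with maximum degree Δ, and let P = {v : f(v) = 1}. Then |P| ≥ n/(Δ+1). -/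
open Finset

theorem stmt_6 {V : Type*} [Fintype V] [DecidableEq V] (G : SimpleGraph V) [DecidableRel G.Adj]
    (f : V → ℤ) (hf : G.MaximalNegativeFn f) :
    (((univ.filter (fun v => f v = 1)).card : ℝ)) ≥
      (Fintype.card V : ℝ) / ((G.maxDegree : ℝ) + 1) := by
  classical
  obtain ⟨⟨hpm, hneg⟩, hmax⟩ := hf
  set P : Finset V := univ.filter (fun v => f v = 1) with hP
  set M : Finset V := univ.filter (fun v => f v = -1) with hM
  have hself : ∀ v : V, v ∈ G.closedNbr v := fun v => Finset.mem_insert_self _ _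
  have hsym : ∀ u v : V, u ∈ G.closedNbr v ↔ v ∈ G.closedNbr u := by
    intro u v
    simp only [SimpleGraph.closedNbr, Finset.mem_insert, SimpleGraph.mem_neighborFinset]
    constructor
    · rintro (rfl | h); · exact Or.inl rfl
      · exact Or.inr h.symm
    · rintro (rfl | h); · exact Or.inl rfl
      · exact Or.inr h.symm
  -- sum over a set equals (#P-part) - (#M-part)
  have hsum : ∀ s : Finset V,
      ∑ u ∈ s, f u = ((s ∩ P).card : ℤ) - ((s ∩ M).card : ℤ) := by
    intro s
    have hsP : s ∩ P = s.filter (fun v => f v = 1) := by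
      ext x; simp [hP, Finset.mem_inter, Finset.mem_filter]
    have hsM : s ∩ M = s.filter (fun v => ¬ f v = 1) := by
      ext x
      simp only [hM, Finset.mem_inter, Finset.mem_filter, Finset.mem_univ, true_and]
      constructor
      · rintro ⟨hx, hfx⟩; exact ⟨hx, by rw [hfx]; decide⟩
      · rintro ⟨hx, hfx⟩; exact ⟨hx, (hpm x).resolve_right hfx⟩
    rw [hsP, hsM, ← Finset.sum_filter_add_sum_filter_not s (fun v => f v = 1)]
    have h1 : ∑ u ∈ s.filter (fun v => f v = 1), f u
        = ((s.filter (fun v => f v = 1)).card : ℤ) := by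
      rw [Finset.sum_congr rfl (fun x hx => (Finset.mem_filter.mp hx).2)]
      simp
    have h2 : ∑ u ∈ s.filter (fun v => ¬ f v = 1), f u
        = -((s.filter (fun v => ¬ f v = 1)).card : ℤ) := by
      rw [Finset.sum_congr rfl
        (fun x hx => (hpm x).resolve_right (Finset.mem_filter.mp hx).2)]
      simp
    rw [h1, h2]; ring
  set Def : Finset V := univ.filter (fun v => G.closedNbr v ∩ P = ∅) with hDef
  have hmemDef : ∀ v : V, v ∈ Def ↔ G.closedNbr v ∩ P = ∅ := by
    intro v; simp [hDef]
  -- vertices in (or adjacent into) a Def-neighborhood have f = -1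
  have hDefM : ∀ v : V, v ∈ Def → ∀ u ∈ G.closedNbr v, f u = -1 := by
    intro v hv u hu
    refine (hpm u).resolve_right (fun h1 => ?_)
    have : u ∈ G.closedNbr v ∩ P := Finset.mem_inter.mpr ⟨hu, by simp [hP, h1]⟩
    rw [(hmemDef v).mp hv] at this
    exact absurd this (Finset.notMem_empty u)
  -- key: every deficient vertex has a u in its closed nbhd with |N[u]∩M| ≤ |N[u]∩P|
  have key : ∀ v : V, v ∈ Def → ∃ u : V, u ∈ G.closedNbr v ∧
      (G.closedNbr u ∩ M).card ≤ (G.closedNbr u ∩ P).card := by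
    intro v hv
    have hfv : f v = -1 := hDefM v hv v (hself v)
    set g : V → ℤ := Function.update f v 1 with hg
    have hgpm : ∀ w, g w = -1 ∨ g w = 1 := by
      intro w
      by_cases hw : w = v
      · subst hw; right; simp [hg]
      · rw [hg, Function.update_of_ne hw]; exact hpm w
    have hgge : ∀ w, f w ≤ g w := by
      intro w
      by_cases hw : w = v
      · subst hw; simp [hg, hfv]
      · rw [hg, Function.update_of_ne hw]
    have hgne : g ≠ f := by
      intro h
      have := congrFun h v
      simp [hg, hfv] at this
    have hgnotneg : ¬ G.NegativeFn g := fun h => hgne (hmax g h hgge)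
    obtain ⟨u, hu⟩ : ∃ u : V, 1 < ∑ w ∈ G.closedNbr u, g w := by
      by_contra hc
      push_neg at hc
      exact hgnotneg ⟨hgpm, hc⟩
    have hvu : v ∈ G.closedNbr u := by
      by_contra hvu
      have heq : ∑ w ∈ G.closedNbr u, g w = ∑ w ∈ G.closedNbr u, f w :=
        Finset.sum_congr rfl (fun w hw =>
          Function.update_of_ne (fun h => hvu (by rw [← h]; exact hw)) _ _)
      rw [heq] at hu
      exact absurd (hneg u) (not_le.mpr hu)
    have hsplit : ∑ w ∈ G.closedNbr u, g w = ∑ w ∈ G.closedNbr u, f w + 2 := by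
      rw [hg, Finset.sum_update_of_mem hvu,
        Finset.sum_eq_add_sum_sdiff_singleton_of_mem hvu f, hfv]
      ring
    have hge0 : (0 : ℤ) ≤ ∑ w ∈ G.closedNbr u, f w := by omega
    rw [hsum (G.closedNbr u)] at hge0
    exact ⟨u, (hsym v u).mp hvu, by exact_mod_cast sub_nonneg.mp hge0⟩
  -- choice function
  have key' : ∀ v : V, ∃ u : V, v ∈ Def → (u ∈ G.closedNbr v ∧
      (G.closedNbr u ∩ M).card ≤ (G.closedNbr u ∩ P).card) := by
    intro v
    by_cases hv : v ∈ Def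
    · obtain ⟨u, hu⟩ := key v hv; exact ⟨u, fun _ => hu⟩
    · exact ⟨v, fun h => absurd h hv⟩
  choose φ hφ using key'
  set dP : V → ℕ := fun v => (G.closedNbr v ∩ P).card with hdP
  set S : Finset V := Def.image φ with hS
  -- facts about u ∈ S
  have hSfact : ∀ u ∈ S, u ∉ Def ∧ (Def.filter (fun v => φ v = u)).card + 1 ≤ dP u := by
    intro u huS
    obtain ⟨v, hvDef, rfl⟩ := Finset.mem_image.mp huS
    obtain ⟨hu1, hu2⟩ := hφ v hvDef
    have hfu : f (φ v) = -1 := hDefM v hvDef (φ v) hu1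
    have huM : φ v ∈ G.closedNbr (φ v) ∩ M :=
      Finset.mem_inter.mpr ⟨hself _, by simp [hM, hfu]⟩
    have hdpos : 1 ≤ dP (φ v) := by
      calc 1 ≤ (G.closedNbr (φ v) ∩ M).card := Finset.card_pos.mpr ⟨_, huM⟩
        _ ≤ dP (φ v) := hu2
    have huDef : φ v ∉ Def := by
      intro h
      have : G.closedNbr (φ v) ∩ P = ∅ := (hmemDef _).mp h
      rw [hdP] at hdpos
      simp [this] at hdpos
    refine ⟨huDef, ?_⟩
    have hsub : insert (φ v) (Def.filter (fun w => φ w = φ v)) ⊆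
        G.closedNbr (φ v) ∩ M := by
      intro w hw
      rcases Finset.mem_insert.mp hw with rfl | hw
      · exact huM
      · obtain ⟨hwDef, hwφ⟩ := Finset.mem_filter.mp hw
        have hw1 : φ w ∈ G.closedNbr w := (hφ w hwDef).1
        rw [hwφ] at hw1
        have hwM : f w = -1 := hDefM w hwDef w (hself w)
        exact Finset.mem_inter.mpr ⟨(hsym (φ v) w).mp hw1, by simp [hM, hwM]⟩
    have hnotmem : φ v ∉ Def.filter (fun w => φ w = φ v) := fun h =>
      huDef (Finset.mem_filter.mp h).1
    calc (Def.filter (fun w => φ w = φ v)).card + 1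
        = (insert (φ v) (Def.filter (fun w => φ w = φ v))).card :=
          (Finset.card_insert_of_notMem hnotmem).symm
      _ ≤ (G.closedNbr (φ v) ∩ M).card := Finset.card_le_card hsub
      _ ≤ dP (φ v) := hu2
  -- Step A : n ≤ ∑ dP
  have hfib : Def.card = ∑ u ∈ S, (Def.filter (fun v => φ v = u)).card :=
    Finset.card_eq_sum_card_fiberwise (fun v hv => Finset.mem_image_of_mem φ hv)
  have hDsub : Def ⊆ univ \ S := by
    intro v hv
    refine Finset.mem_sdiff.mpr ⟨Finset.mem_univ v, fun hvS => ?_⟩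
    exact (hSfact v hvS).1 hv
  have e1 : ∑ v ∈ univ \ S, dP v + ∑ v ∈ S, dP v = ∑ v ∈ univ, dP v :=
    Finset.sum_sdiff (Finset.subset_univ S)
  have e2 : ∑ v ∈ (univ \ S) \ Def, dP v + ∑ v ∈ Def, dP v = ∑ v ∈ univ \ S, dP v :=
    Finset.sum_sdiff hDsub
  have c1 : ((univ \ S) \ Def).card ≤ ∑ v ∈ (univ \ S) \ Def, dP v := by
    rw [Finset.card_eq_sum_ones]
    refine Finset.sum_le_sum (fun v hv => ?_)
    have hvD : v ∉ Def := (Finset.mem_sdiff.mp hv).2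
    have : G.closedNbr v ∩ P ≠ ∅ := fun h => hvD ((hmemDef v).mpr h)
    exact Finset.card_pos.mpr (Finset.nonempty_of_ne_empty this)
  have c2 : Def.card + S.card ≤ ∑ v ∈ S, dP v := by
    rw [hfib, Finset.card_eq_sum_ones S, ← Finset.sum_add_distrib]
    exact Finset.sum_le_sum (fun u hu => (hSfact u hu).2)
  have c0 : ((univ \ S) \ Def).card + Def.card + S.card = Fintype.card V := by
    rw [Finset.card_sdiff_add_card_eq_card hDsub,
      Finset.card_sdiff_add_card_eq_card (Finset.subset_univ S), Finset.card_univ]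
  have hA : Fintype.card V ≤ ∑ v ∈ univ, dP v := by omega
  -- Step B : double counting
  have hB : ∑ v ∈ univ, dP v = ∑ p ∈ P, (G.closedNbr p).card := by
    have h1 : ∀ v : V, dP v = ∑ p ∈ P, if v ∈ G.closedNbr p then 1 else 0 := by
      intro v
      have : G.closedNbr v ∩ P = P.filter (fun p => p ∈ G.closedNbr v) := by
        ext x; simp [Finset.mem_inter, Finset.mem_filter, and_comm]
      rw [hdP]; dsimp only
      rw [this, Finset.card_filter]
      exact Finset.sum_congr rfl (fun p _ => by rw [if_congr (hsym p v) rfl rfl])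
    simp_rw [h1]
    rw [Finset.sum_comm]
    refine Finset.sum_congr rfl (fun p _ => ?_)
    rw [Finset.sum_ite_mem, Finset.univ_inter, Finset.card_eq_sum_ones]
  -- Step C : closed neighborhood sizes
  have hC : ∀ p : V, (G.closedNbr p).card ≤ G.maxDegree + 1 := by
    intro p
    have : (G.closedNbr p).card = G.degree p + 1 := by
      rw [SimpleGraph.closedNbr,
        Finset.card_insert_of_notMem (G.notMem_neighborFinset_self p)]
      rfl
    rw [this]
    exact Nat.add_le_add_right (G.degree_le_maxDegree p) 1
  have hmain : Fintype.card V ≤ P.card * (G.maxDegree + 1) := by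
    calc Fintype.card V ≤ ∑ v ∈ univ, dP v := hA
      _ = ∑ p ∈ P, (G.closedNbr p).card := hB
      _ ≤ ∑ _p ∈ P, (G.maxDegree + 1) := Finset.sum_le_sum (fun p _ => hC p)
      _ = P.card * (G.maxDegree + 1) := by rw [Finset.sum_const, smul_eq_mul]
  rw [ge_iff_le, div_le_iff₀ (by positivity)]
  exact_mod_cast hmain
end

section
/- Let G be a finite simple graph of order n with maximum degree Δ. Then every maximal negative function f on G satisfies f(V(G)) ≥ (1-Δ)n/(1+Δ); in particular the lower against number β*_N(G) ≥ (1-Δ)n/(1+Δ). -/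
open Finset

theorem stmt_7 {V : Type*} [Fintype V] [DecidableEq V] (G : SimpleGraph V) [DecidableRel G.Adj]
    (f : V → ℤ) (hf : G.MaximalNegativeFn f) :
    (∑ v : V, (f v : ℝ)) ≥
      (1 - (G.maxDegree : ℝ)) * (Fintype.card V : ℝ) / (1 + (G.maxDegree : ℝ)) := by
  classical
  have hmem : ∀ u x : V, x ∈ G.closedNbr u ↔ x = u ∨ G.Adj u x := by
    intro u x
    simp [SimpleGraph.closedNbr, SimpleGraph.mem_neighborFinset]
  have hsymm : ∀ u x : V, x ∈ G.closedNbr u → u ∈ G.closedNbr x := by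
    intro u x hx
    rcases (hmem u x).mp hx with h | h
    · exact (hmem x u).mpr (Or.inl h.symm)
    · exact (hmem x u).mpr (Or.inr h.symm)
  set P : Finset V := univ.filter (fun v => f v = 1) with hPdef
  set M : Finset V := univ.filter (fun v => ¬ f v = 1) with hMdef
  have hfm : ∀ v ∈ M, f v = -1 := by
    intro v hv
    exact (hf.1.1 v).resolve_right (by simpa [hMdef] using hv)
  have hfp : ∀ v ∈ P, f v = 1 := by
    intro v hv
    simpa [hPdef] using hv
  set np : V → ℕ := fun v => (P.filter (fun w => G.Adj v w)).card with hnp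
  set nm : V → ℕ := fun v => (M.filter (fun w => G.Adj v w)).card with hnm
  have hvnot : ∀ v : V, v ∉ G.neighborFinset v := by
    intro v; simp
  -- sum over closed neighborhood in terms of np/nm
  have hs : ∀ u : V, ∑ x ∈ G.closedNbr u, f x = f u + (np u : ℤ) - nm u := by
    intro u
    have h1 : ∑ x ∈ G.closedNbr u, f x = f u + ∑ x ∈ G.neighborFinset u, f x := by
      rw [SimpleGraph.closedNbr, Finset.sum_insert (hvnot u)]
    have h3 : (G.neighborFinset u).filter (fun w => f w = 1) = P.filter (fun w => G.Adj u w) := by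
      ext x
      simp only [Finset.mem_filter, SimpleGraph.mem_neighborFinset, hPdef, Finset.mem_univ,
        true_and]
      tauto
    have h4 : (G.neighborFinset u).filter (fun w => ¬ f w = 1) = M.filter (fun w => G.Adj u w) := by
      ext x
      simp only [Finset.mem_filter, SimpleGraph.mem_neighborFinset, hMdef, Finset.mem_univ,
        true_and]
      tauto
    have h2 : ∑ x ∈ G.neighborFinset u, f x
        = ∑ x ∈ P.filter (fun w => G.Adj u w), f x
          + ∑ x ∈ M.filter (fun w => G.Adj u w), f x := by
      rw [← h3, ← h4]
      exact (Finset.sum_filter_add_sum_filter_not _ _ _).symm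
    have h5 : ∑ x ∈ P.filter (fun w => G.Adj u w), f x = (np u : ℤ) := by
      rw [Finset.sum_congr rfl (fun x hx => hfp x (Finset.mem_of_mem_filter x hx))]
      simp [hnp]
    have h6 : ∑ x ∈ M.filter (fun w => G.Adj u w), f x = -(nm u : ℤ) := by
      rw [Finset.sum_congr rfl (fun x hx => hfm x (Finset.mem_of_mem_filter x hx))]
      simp [hnm]
    rw [h1, h2, h5, h6]; ring
  -- maximality: every -1 vertex has a closed neighbor with nonneg closed sum
  have hflip : ∀ v : V, f v = -1 → ∃ u ∈ G.closedNbr v, 0 ≤ ∑ x ∈ G.closedNbr u, f x := by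
    intro v hv
    by_contra hcon
    push_neg at hcon
    set g : V → ℤ := Function.update f v 1 with hg
    have hgv : g v = 1 := Function.update_self v 1 f
    have hgx : ∀ x, x ≠ v → g x = f x := fun x hx => Function.update_of_ne hx 1 f
    have hneg : G.NegativeFn g := by
      constructor
      · intro u
        by_cases hu : u = v
        · subst hu; rw [hgv]; exact Or.inr rfl
        · rw [hgx u hu]; exact hf.1.1 u
      · intro u
        by_cases hvu : v ∈ G.closedNbr u
        · have hsum : ∑ x ∈ G.closedNbr u, g x = (∑ x ∈ G.closedNbr u, f x) - f v + 1 := by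
            rw [← Finset.sum_erase_add _ g hvu, ← Finset.sum_erase_add _ f hvu]
            have : ∑ x ∈ (G.closedNbr u).erase v, g x = ∑ x ∈ (G.closedNbr u).erase v, f x :=
              Finset.sum_congr rfl fun x hx => hgx x (Finset.ne_of_mem_erase hx)
            rw [this, hgv]; ring
          have hlt := hcon u (hsymm u v hvu)
          rw [hsum, hv]
          omega
        · have hsum : ∑ x ∈ G.closedNbr u, g x = ∑ x ∈ G.closedNbr u, f x := by
            refine Finset.sum_congr rfl fun x hx => hgx x ?_
            rintro rfl; exact hvu hx
          rw [hsum]; exact hf.1.2 u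
    have := hf.2 g hneg (by
      intro x
      by_cases hx : x = v
      · subst hx; rw [hgv, hv]; omega
      · rw [hgx x hx])
    have : g v = f v := by rw [this]
    rw [hgv, hv] at this
    omega
  -- partition of M
  set A : Finset V := M.filter (fun v => nm v < np v) with hAdef
  have hAM : A ⊆ M := Finset.filter_subset _ _
  set B : Finset V := M \ A with hBdef
  set B₁ : Finset V := B.filter (fun v => 0 < np v) with hB1def
  set B₂ : Finset V := B \ B₁ with hB2def
  have hB1B : B₁ ⊆ B := Finset.filter_subset _ _
  have hB2M : B₂ ⊆ M := fun x hx => (Finset.sdiff_subset (Finset.mem_sdiff.mp hx).1 : x ∈ M)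
  -- every vertex of B₂ has a neighbor in A
  have hB2nbr : ∀ v ∈ B₂, ∃ u ∈ A, G.Adj v u := by
    intro v hv
    have hvB : v ∈ B := (Finset.mem_sdiff.mp hv).1
    have hvM : v ∈ M := (Finset.mem_sdiff.mp hvB).1
    have hvnA : v ∉ A := (Finset.mem_sdiff.mp hvB).2
    have hvnB1 : v ∉ B₁ := (Finset.mem_sdiff.mp hv).2
    have hnp0 : np v = 0 := by
      by_contra h
      exact hvnB1 (Finset.mem_filter.mpr ⟨hvB, Nat.pos_of_ne_zero h⟩)
    obtain ⟨u, hu, hsu⟩ := hflip v (hfm v hvM)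
    rw [hs u] at hsu
    rcases (hmem v u).mp hu with heq | hadj
    · exfalso
      rw [heq, hfm v hvM, hnp0] at hsu
      omega
    · rcases hf.1.1 u with hu1 | hu1
      · rw [hu1] at hsu
        have huM : u ∈ M := Finset.mem_filter.mpr ⟨Finset.mem_univ u, by rw [hu1]; norm_num⟩
        have hlt : nm u < np u := by omega
        exact ⟨u, Finset.mem_filter.mpr ⟨huM, hlt⟩, hadj⟩
      · have huP : u ∈ P := Finset.mem_filter.mpr ⟨Finset.mem_univ u, hu1⟩
        exfalso
        have hmemf : u ∈ P.filter (fun w => G.Adj v w) := Finset.mem_filter.mpr ⟨huP, hadj⟩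
        have hcp : 0 < (P.filter (fun w => G.Adj v w)).card := Finset.card_pos.mpr ⟨u, hmemf⟩
        have : 0 < np v := by rw [hnp]; exact hcp
        omega
  -- double counting
  have hdouble : ∀ S T : Finset V, ∑ v ∈ S, (T.filter (fun w => G.Adj v w)).card
      = ∑ w ∈ T, (S.filter (fun v => G.Adj w v)).card := by
    intro S T
    simp only [Finset.card_filter]
    rw [Finset.sum_comm]
    exact Finset.sum_congr rfl fun w _ => Finset.sum_congr rfl fun v _ => by
      simp [G.adj_comm]
  -- key inequality: M.card ≤ Δ * P.card
  have hMsplit : ∑ v ∈ M, np v = ∑ v ∈ A, np v + (∑ v ∈ B₁, np v + ∑ v ∈ B₂, np v) := by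
    have h1 : ∑ v ∈ B, np v + ∑ v ∈ A, np v = ∑ v ∈ M, np v := by
      rw [hBdef]; exact Finset.sum_sdiff hAM
    have h2 : ∑ v ∈ B₂, np v + ∑ v ∈ B₁, np v = ∑ v ∈ B, np v := by
      rw [hB2def]; exact Finset.sum_sdiff hB1B
    omega
  have hA1 : ∑ v ∈ A, np v ≥ ∑ v ∈ A, nm v + A.card := by
    have : ∑ v ∈ A, np v ≥ ∑ v ∈ A, (nm v + 1) := by
      refine Finset.sum_le_sum fun v hv => ?_
      exact (Finset.mem_filter.mp hv).2
    rw [Finset.sum_add_distrib, Finset.sum_const, smul_eq_mul, mul_one] at this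
    exact this
  have hB1c : ∑ v ∈ B₁, np v ≥ B₁.card := by
    calc B₁.card = ∑ _v ∈ B₁, 1 := by simp
    _ ≤ ∑ v ∈ B₁, np v := Finset.sum_le_sum fun v hv => (Finset.mem_filter.mp hv).2
  have hAnm : ∑ v ∈ A, nm v ≥ B₂.card := by
    have h1 : ∑ v ∈ A, nm v ≥ ∑ v ∈ A, (B₂.filter (fun w => G.Adj v w)).card := by
      refine Finset.sum_le_sum fun v _ => ?_
      exact Finset.card_le_card (Finset.filter_subset_filter _ hB2M)
    have h2 : ∑ v ∈ A, (B₂.filter (fun w => G.Adj v w)).card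
        = ∑ v ∈ B₂, (A.filter (fun w => G.Adj v w)).card := hdouble A B₂
    have h3 : ∑ v ∈ B₂, (A.filter (fun w => G.Adj v w)).card ≥ B₂.card := by
      calc B₂.card = ∑ _v ∈ B₂, 1 := by simp
      _ ≤ _ := Finset.sum_le_sum fun v hv => by
          obtain ⟨u, huA, hadj⟩ := hB2nbr v hv
          exact Finset.card_pos.mpr ⟨u, Finset.mem_filter.mpr ⟨huA, hadj⟩⟩
    omega
  have hMcards : M.card = A.card + (B₁.card + B₂.card) := by
    have h1 : B.card + A.card = M.card := by
      rw [hBdef]; exact Finset.card_sdiff_add_card_eq_card hAM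
    have h2 : B₂.card + B₁.card = B.card := by
      rw [hB2def]; exact Finset.card_sdiff_add_card_eq_card hB1B
    omega
  have hMle : M.card ≤ ∑ v ∈ M, np v := by omega
  have hPd : ∑ v ∈ M, np v ≤ G.maxDegree * P.card := by
    rw [hnp, hdouble M P]
    calc ∑ w ∈ P, (M.filter (fun v => G.Adj w v)).card
        ≤ ∑ _w ∈ P, G.maxDegree := by
          refine Finset.sum_le_sum fun w _ => ?_
          calc (M.filter (fun v => G.Adj w v)).card
              ≤ (G.neighborFinset w).card := by
                refine Finset.card_le_card fun x hx => ?_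
                rw [SimpleGraph.mem_neighborFinset]
                exact (Finset.mem_filter.mp hx).2
          _ = G.degree w := (G.card_neighborFinset_eq_degree w)
          _ ≤ G.maxDegree := G.degree_le_maxDegree w
    _ = G.maxDegree * P.card := by rw [Finset.sum_const, smul_eq_mul, mul_comm]
  have hkey : M.card ≤ G.maxDegree * P.card := le_trans hMle hPd
  have hncard : P.card + M.card = Fintype.card V := by
    rw [hPdef, hMdef]
    exact Finset.card_filter_add_card_filter_not _
  -- sum of f
  have hfsum : ∑ v : V, f v = (P.card : ℤ) - M.card := by
    rw [← Finset.sum_filter_add_sum_filter_not univ (fun v => f v = 1) f]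
    have h5 : ∑ x ∈ P, f x = (P.card : ℤ) := by
      rw [Finset.sum_congr rfl (fun x hx => hfp x hx)]
      simp
    have h6 : ∑ x ∈ M, f x = -(M.card : ℤ) := by
      rw [Finset.sum_congr rfl (fun x hx => hfm x hx)]
      simp
    rw [← hPdef, ← hMdef] at *
    rw [h5, h6]; ring
  -- finish over ℝ
  have hfsumR : (∑ v : V, (f v : ℝ)) = (P.card : ℝ) - M.card := by
    have : (∑ v : V, (f v : ℝ)) = ((∑ v : V, f v : ℤ) : ℝ) := by push_cast; ring
    rw [this, hfsum]; push_cast; ring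
  rw [hfsumR, ge_iff_le, div_le_iff₀ (by positivity : (0:ℝ) < 1 + (G.maxDegree : ℝ))]
  have hkeyR : (M.card : ℝ) ≤ (G.maxDegree : ℝ) * P.card := by exact_mod_cast hkey
  have hnR : (P.card : ℝ) + M.card = Fintype.card V := by exact_mod_cast hncard
  nlinarith [hkeyR, hnR]
end

section
/- Let G be an r-regular finite simple graph of order n with r odd. Then the lower against number satisfies β*_N(G) ≥ (1-r)n/(1+r). -/
open Finset

lemma closedNbr_self_mem {V : Type*} [Fintype V] [DecidableEq V] (G : SimpleGraph V)
    [DecidableRel G.Adj] (v : V) : v ∈ G.closedNbr v :=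
  Finset.mem_insert_self _ _

lemma mem_closedNbr_comm {V : Type*} [Fintype V] [DecidableEq V] (G : SimpleGraph V)
    [DecidableRel G.Adj] {u v : V} : u ∈ G.closedNbr v ↔ v ∈ G.closedNbr u := by
  simp only [SimpleGraph.closedNbr, Finset.mem_insert, SimpleGraph.mem_neighborFinset]
  constructor
  · rintro (h | h)
    · exact Or.inl h.symm
    · exact Or.inr h.symm
  · rintro (h | h)
    · exact Or.inl h.symm
    · exact Or.inr h.symm

lemma card_closedNbr {V : Type*} [Fintype V] [DecidableEq V] (G : SimpleGraph V)
    [DecidableRel G.Adj] {r : ℕ} (hreg : G.IsRegularOfDegree r) (v : V) :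
    (G.closedNbr v).card = r + 1 := by
  have hv : v ∉ G.neighborFinset v := by
    simp [SimpleGraph.mem_neighborFinset]
  rw [SimpleGraph.closedNbr, Finset.card_insert_of_notMem hv,
    G.card_neighborFinset_eq_degree, hreg v]

theorem stmt_10 {V : Type*} [Fintype V] [DecidableEq V] (G : SimpleGraph V) [DecidableRel G.Adj]
    (r : ℕ) (hreg : G.IsRegularOfDegree r) (hodd : Odd r) :
    ∀ f : V → ℤ, G.MaximalNegativeFn f →
      (∑ v : V, (f v : ℝ)) ≥ (1 - (r : ℝ)) * (Fintype.card V : ℝ) / (1 + (r : ℝ)) := by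
  intro f hf
  obtain ⟨⟨hpm, hle⟩, hmax⟩ := hf
  obtain ⟨k, hk⟩ := hodd
  set S : V → ℤ := fun v => ∑ u ∈ G.closedNbr v, f u with hS
  have hleS : ∀ v, S v ≤ 1 := hle
  have hcard : ∀ v : V, ((G.closedNbr v).card : ℤ) = (r : ℤ) + 1 := by
    intro v; rw [card_closedNbr G hreg v]; push_cast; ring
  -- each S v is even, hence ≤ 0
  have hSdvd : ∀ v, (2 : ℤ) ∣ (S v - ((r : ℤ) + 1)) := by
    intro v
    have h1 : S v - ((r : ℤ) + 1) = ∑ u ∈ G.closedNbr v, (f u - 1) := by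
      rw [Finset.sum_sub_distrib, Finset.sum_const, nsmul_eq_mul, hcard v]
      simp [hS]
    rw [h1]
    refine Finset.dvd_sum fun u _ => ?_
    rcases hpm u with h | h <;> simp [h]
  have hSeven : ∀ v, (2 : ℤ) ∣ S v := by
    intro v
    have h2 : (2 : ℤ) ∣ ((r : ℤ) + 1) := ⟨(k : ℤ) + 1, by push_cast [hk]; ring⟩
    have := dvd_add (hSdvd v) h2
    simpa using this
  have hSle0 : ∀ v, S v ≤ 0 := by
    intro v
    obtain ⟨m, hm⟩ := hSeven v
    have h1 := hleS v
    omega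
  have hSlb : ∀ v, -((r : ℤ) + 1) ≤ S v := by
    intro v
    have h1 : ∑ u ∈ G.closedNbr v, (-1 : ℤ) ≤ S v :=
      Finset.sum_le_sum fun u _ => by rcases hpm u with h | h <;> omega
    rw [Finset.sum_const, nsmul_eq_mul, hcard v] at h1
    linarith
  -- bad vertices: all of N[v] is negative
  have hbad_all : ∀ v, S v = -((r : ℤ) + 1) → ∀ u ∈ G.closedNbr v, f u = -1 := by
    intro v hv u hu
    have heq : ∑ u ∈ G.closedNbr v, (-1 : ℤ) = ∑ u ∈ G.closedNbr v, f u := by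
      rw [Finset.sum_const, nsmul_eq_mul, hcard v]
      have hv' : ∑ u ∈ G.closedNbr v, f u = -((r : ℤ) + 1) := hv
      rw [hv']; ring
    have := (Finset.sum_eq_sum_iff_of_le
      (fun u _ => by rcases hpm u with h | h <;> omega)).mp heq u hu
    omega
  -- key maximality consequence
  have hkey : ∀ u, S u = -((r : ℤ) + 1) →
      ∃ w ∈ G.closedNbr u, w ≠ u ∧ f w = -1 ∧ S w = 0 := by
    intro u hu
    set g := Function.update f u 1 with hg
    have hfu : f u = -1 := hbad_all u hu u (closedNbr_self_mem G u)
    have hgf : ∀ x, f x ≤ g x := by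
      intro x
      by_cases hx : x = u
      · subst hx; simp [hg, hfu]
      · simp [hg, Function.update_of_ne hx]
    have hgne : g ≠ f := by
      intro h
      have := congrFun h u
      simp [hg, hfu] at this
    have hg1 : ∀ x, g x = -1 ∨ g x = 1 := by
      intro x
      by_cases hx : x = u
      · subst hx; simp [hg]
      · rw [hg, Function.update_of_ne hx]; exact hpm x
    have hnotneg : ¬ G.NegativeFn g := fun hneg => hgne (hmax g hneg hgf)
    have hw2 : ∃ w, 1 < ∑ x ∈ G.closedNbr w, g x := by
      by_contra h
      push_neg at h
      exact hnotneg ⟨hg1, h⟩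
    obtain ⟨w, hw⟩ := hw2
    have hmem : u ∈ G.closedNbr w := by
      by_contra hmem
      have heq : ∑ x ∈ G.closedNbr w, g x = S w := by
        refine Finset.sum_congr rfl fun x hx => ?_
        have hxu : x ≠ u := fun h => hmem (h ▸ hx)
        rw [hg, Function.update_of_ne hxu]
      rw [heq] at hw
      have := hleS w
      omega
    have hsum : ∑ x ∈ G.closedNbr w, g x = S w + 2 := by
      have hdiff : ∑ x ∈ G.closedNbr w, g x - S w
          = ∑ x ∈ G.closedNbr w, (g x - f x) := by
        rw [Finset.sum_sub_distrib]
      have hterm : ∀ x, g x - f x = if x = u then 2 else 0 := by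
        intro x
        by_cases hx : x = u
        · subst hx; simp [hg, hfu]
        · simp [hg, Function.update_of_ne hx, hx]
      have h2 : ∑ x ∈ G.closedNbr w, (g x - f x) = 2 := by
        simp only [hterm]
        rw [Finset.sum_ite_eq' (G.closedNbr w) u (fun _ => (2 : ℤ))]
        simp [hmem]
      omega
    have hSw0 : S w = 0 := le_antisymm (hSle0 w) (by omega)
    have hwmem : w ∈ G.closedNbr u := (mem_closedNbr_comm G).mp hmem
    have hfw : f w = -1 := hbad_all u hu w hwmem
    have hwne : w ≠ u := by
      intro h
      rw [h] at hSw0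
      omega
    exact ⟨w, hwmem, hwne, hfw, hSw0⟩
  classical
  -- counting
  set Bad : Finset V := univ.filter (fun v => S v = -((r : ℤ) + 1)) with hBad
  set W : Finset V := univ.filter (fun w => S w = 0 ∧ f w = -1) with hW
  choose! wmap hwm1 hwm2 hwm3 hwm4 using hkey
  have hmapW : ∀ u ∈ Bad, wmap u ∈ W := by
    intro u hu
    rw [hBad, Finset.mem_filter] at hu
    rw [hW, Finset.mem_filter]
    exact ⟨Finset.mem_univ _, hwm4 u hu.2, hwm3 u hu.2⟩
  have hcount : Bad.card = ∑ w ∈ W, (Bad.filter (fun u => wmap u = w)).card :=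
    Finset.card_eq_sum_card_fiberwise hmapW
  -- each fiber has ≤ k elements
  have hfiber : ∀ w ∈ W, (Bad.filter (fun u => wmap u = w)).card ≤ k := by
    intro w hw
    rw [hW, Finset.mem_filter] at hw
    obtain ⟨-, hSw, hfw⟩ := hw
    set B : Finset V := (G.closedNbr w).filter (fun x => f x = -1) with hBdef
    have hsub : Bad.filter (fun u => wmap u = w) ⊆ B.erase w := by
      intro u hu
      rw [Finset.mem_filter] at hu
      obtain ⟨huBad, huw⟩ := hu
      rw [hBad, Finset.mem_filter] at huBad
      have hSu := huBad.2
      have h1 : wmap u ∈ G.closedNbr u := hwm1 u hSu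
      have h2 : wmap u ≠ u := hwm2 u hSu
      rw [huw] at h1 h2
      rw [Finset.mem_erase]
      refine ⟨h2.symm, ?_⟩
      rw [hBdef, Finset.mem_filter]
      exact ⟨(mem_closedNbr_comm G).mp h1,
        hbad_all u hSu u (closedNbr_self_mem G u)⟩
    have hwB : w ∈ B := by
      rw [hBdef, Finset.mem_filter]
      exact ⟨closedNbr_self_mem G w, hfw⟩
    -- compute B.card from S w = 0
    have hcardB : B.card = k + 1 := by
      set A : Finset V := (G.closedNbr w).filter (fun x => f x = 1) with hAdef
      have hBeq : (G.closedNbr w).filter (fun x => ¬ f x = 1) = B := by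
        refine Finset.filter_congr fun x _ => ?_
        rcases hpm x with h | h <;> simp [h]
      have hAB : A.card + B.card = r + 1 := by
        have h := Finset.card_filter_add_card_filter_not
          (s := G.closedNbr w) (fun x => f x = 1)
        rw [card_closedNbr G hreg w, hBeq] at h
        exact h
      have h1 : ∑ x ∈ A, f x = (A.card : ℤ) := by
        have he : ∑ x ∈ A, f x = ∑ x ∈ A, (1 : ℤ) :=
          Finset.sum_congr rfl fun x hx => (Finset.mem_filter.mp hx).2
        rw [he]; simp
      have h2 : ∑ x ∈ B, f x = -(B.card : ℤ) := by
        have he : ∑ x ∈ B, f x = ∑ x ∈ B, (-1 : ℤ) :=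
          Finset.sum_congr rfl fun x hx => (Finset.mem_filter.mp hx).2
        rw [he]; simp
      have h3 : ∑ x ∈ A, f x + ∑ x ∈ (G.closedNbr w).filter (fun x => ¬ f x = 1), f x
          = S w := Finset.sum_filter_add_sum_filter_not _ _ _
      rw [hBeq, h1, h2, hSw] at h3
      omega
    calc (Bad.filter (fun u => wmap u = w)).card ≤ (B.erase w).card :=
          Finset.card_le_card hsub
      _ = B.card - 1 := Finset.card_erase_of_mem hwB
      _ = k := by omega
  have hBadW : Bad.card ≤ k * W.card := by
    rw [hcount]
    calc ∑ w ∈ W, (Bad.filter (fun u => wmap u = w)).card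
        ≤ ∑ w ∈ W, k := Finset.sum_le_sum hfiber
      _ = W.card * k := by rw [Finset.sum_const, smul_eq_mul]
      _ = k * W.card := by ring
  -- non-bad vertices have S v ≥ -(r-1)
  have hnonbad : ∀ v, v ∉ Bad → -((r : ℤ) - 1) ≤ S v := by
    intro v hv
    rw [hBad, Finset.mem_filter] at hv
    push_neg at hv
    have h1 := hv (Finset.mem_univ v)
    have h2 := hSlb v
    obtain ⟨m, hm⟩ := hSeven v
    have h3 : ((r : ℤ) + 1) = 2 * ((k : ℤ) + 1) := by push_cast [hk]; ring
    omega
  -- main sum estimate over ℤ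
  have hmain : (1 - (r : ℤ)) * (Fintype.card V : ℤ) ≤ ∑ v : V, S v := by
    have hsplit : ∑ v : V, (S v + (r : ℤ) - 1)
        = ∑ v ∈ Bad, (S v + (r : ℤ) - 1) + ∑ v ∈ Badᶜ, (S v + (r : ℤ) - 1) :=
      (Finset.sum_add_sum_compl Bad _).symm
    have hBadsum : ∑ v ∈ Bad, (S v + (r : ℤ) - 1) = -2 * (Bad.card : ℤ) := by
      have hc : ∀ v ∈ Bad, S v + (r : ℤ) - 1 = -2 := by
        intro v hv
        rw [hBad, Finset.mem_filter] at hv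
        rw [hv.2]; ring
      rw [Finset.sum_congr rfl hc, Finset.sum_const, nsmul_eq_mul]
      ring
    have hWsub : W ⊆ Badᶜ := by
      intro w hw
      rw [hW, Finset.mem_filter] at hw
      rw [Finset.mem_compl, hBad, Finset.mem_filter]
      push_neg
      intro _
      rw [hw.2.1]
      have h0 : (0 : ℤ) < (r : ℤ) + 1 := by positivity
      omega
    have hWsum : ∑ v ∈ W, (S v + (r : ℤ) - 1) = ((r : ℤ) - 1) * (W.card : ℤ) := by
      have hc : ∀ v ∈ W, S v + (r : ℤ) - 1 = (r : ℤ) - 1 := by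
        intro v hv
        rw [hW, Finset.mem_filter] at hv
        rw [hv.2.1]; ring
      rw [Finset.sum_congr rfl hc, Finset.sum_const, nsmul_eq_mul]
      ring
    have hcompl : ∑ v ∈ W, (S v + (r : ℤ) - 1) ≤ ∑ v ∈ Badᶜ, (S v + (r : ℤ) - 1) := by
      refine Finset.sum_le_sum_of_subset_of_nonneg hWsub fun v hv _ => ?_
      have := hnonbad v (Finset.mem_compl.mp hv)
      omega
    have hr2k : ((r : ℤ) - 1) * (W.card : ℤ) = 2 * ((k : ℤ) * (W.card : ℤ)) := by
      push_cast [hk]; ring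
    have h2 : (Bad.card : ℤ) ≤ (k : ℤ) * (W.card : ℤ) := by exact_mod_cast hBadW
    have hkey2 : (0 : ℤ) ≤ ∑ v : V, (S v + (r : ℤ) - 1) := by
      rw [hsplit, hBadsum]
      have h1 : ((r : ℤ) - 1) * (W.card : ℤ) ≤ ∑ v ∈ Badᶜ, (S v + (r : ℤ) - 1) := by
        rw [← hWsum]; exact hcompl
      linarith
    have hexp : ∑ v : V, (S v + (r : ℤ) - 1)
        = ∑ v : V, S v + ((r : ℤ) - 1) * (Fintype.card V : ℤ) := by
      have hc : ∀ v : V, S v + (r : ℤ) - 1 = S v + ((r : ℤ) - 1) := fun v => by ring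
      simp only [hc]
      rw [Finset.sum_add_distrib, Finset.sum_const, nsmul_eq_mul, Finset.card_univ]
      ring
    rw [hexp] at hkey2
    nlinarith [hkey2]
  -- double counting : ∑ S v = (r+1) ∑ f v
  have hdouble : ∑ v : V, S v = ((r : ℤ) + 1) * ∑ v : V, f v := by
    have hcomm : ∑ v : V, ∑ u ∈ G.closedNbr v, f u
        = ∑ u : V, ∑ v ∈ G.closedNbr u, f u := by
      refine Finset.sum_comm' fun v u => ?_
      simp only [Finset.mem_univ, true_and, and_true]
      exact mem_closedNbr_comm G
    calc ∑ v : V, S v = ∑ u : V, ∑ v ∈ G.closedNbr u, f u := hcomm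
      _ = ∑ u : V, ((r : ℤ) + 1) * f u := by
          refine Finset.sum_congr rfl fun u _ => ?_
          rw [Finset.sum_const, nsmul_eq_mul, hcard u]
      _ = ((r : ℤ) + 1) * ∑ u : V, f u := by rw [Finset.mul_sum]
  -- conclude over ℝ
  have hZ : (1 - (r : ℤ)) * (Fintype.card V : ℤ) ≤ ((r : ℤ) + 1) * ∑ v : V, f v := by
    rw [← hdouble]; exact hmain
  have hR : (1 - (r : ℝ)) * (Fintype.card V : ℝ) ≤ ((r : ℝ) + 1) * ∑ v : V, (f v : ℝ) := by
    have h : (((1 - (r : ℤ)) * (Fintype.card V : ℤ) : ℤ) : ℝ) ≤ ((((r : ℤ) + 1) * ∑ v : V, f v : ℤ) : ℝ) :=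
      Int.cast_le.mpr hZ
    push_cast at h
    exact h
  have hpos : (0 : ℝ) < 1 + (r : ℝ) := by positivity
  rw [ge_iff_le, div_le_iff₀ hpos]
  have h2 : ((r : ℝ) + 1) * ∑ v : V, (f v : ℝ) = (∑ v : V, (f v : ℝ)) * (1 + (r : ℝ)) := by
    ring
  linarith [hR, h2]
end

section
/- Let G be a finite simple graph on n vertices in which every vertex has degree r-1 or r (a nearly r-regular graph). Then β*_N(G) ≥ (1-r)n/(1+r). -/
open Finset

section Aux

variable {V : Type*} [Fintype V] [DecidableEq V] (G : SimpleGraph V) [DecidableRel G.Adj]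

lemma aux_mem_closedNbr {x v : V} : x ∈ G.closedNbr v ↔ x = v ∨ G.Adj v x := by
  simp [SimpleGraph.closedNbr]

lemma aux_self_mem_closedNbr (v : V) : v ∈ G.closedNbr v := by
  simp [SimpleGraph.closedNbr]

lemma aux_closedNbr_comm {x v : V} : x ∈ G.closedNbr v ↔ v ∈ G.closedNbr x := by
  rw [aux_mem_closedNbr, aux_mem_closedNbr]
  constructor
  · rintro (h | h)
    · exact Or.inl h.symm
    · exact Or.inr h.symm
  · rintro (h | h)
    · exact Or.inl h.symm
    · exact Or.inr h.symm

lemma aux_card_closedNbr (v : V) : (G.closedNbr v).card = G.degree v + 1 := by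
  rw [SimpleGraph.closedNbr, card_insert_of_notMem (by simp)]
  rfl

/-- swap a double sum over closed neighborhoods. -/
lemma aux_swap (S : Finset V) (g : V → ℤ) :
    ∑ u ∈ S, ∑ x ∈ G.closedNbr u, g x
      = ∑ x : V, g x * ((S ∩ G.closedNbr x).card : ℤ) := by
  have h1 : ∀ u : V, ∑ x ∈ G.closedNbr u, g x
      = ∑ x : V, (if u ∈ G.closedNbr x then g x else 0) := by
    intro u
    rw [show (G.closedNbr u) = univ ∩ (G.closedNbr u) by rw [univ_inter],
      ← Finset.sum_ite_mem]
    refine Finset.sum_congr rfl fun x _ => ?_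
    exact if_congr (aux_closedNbr_comm G) rfl rfl
  calc ∑ u ∈ S, ∑ x ∈ G.closedNbr u, g x
      = ∑ u ∈ S, ∑ x : V, (if u ∈ G.closedNbr x then g x else 0) := by
        exact Finset.sum_congr rfl fun u _ => h1 u
    _ = ∑ x : V, ∑ u ∈ S, (if u ∈ G.closedNbr x then g x else 0) := Finset.sum_comm
    _ = ∑ x : V, g x * ((S ∩ G.closedNbr x).card : ℤ) := by
        refine Finset.sum_congr rfl fun x _ => ?_
        rw [Finset.sum_ite_mem, Finset.sum_const, nsmul_eq_mul, mul_comm]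

/-- double counting pairs: `∑_{v∈S} |T ∩ N[v]| = ∑_{w∈T} |S ∩ N[w]|`. -/
lemma aux_pair_count (S T : Finset V) :
    ∑ v ∈ S, ((T ∩ G.closedNbr v).card : ℤ) = ∑ w ∈ T, ((S ∩ G.closedNbr w).card : ℤ) := by
  have key : ∀ (X Y : Finset V), ∑ v ∈ X, ((Y ∩ G.closedNbr v).card : ℤ)
      = ∑ v ∈ X, ∑ w ∈ Y, (if w ∈ G.closedNbr v then (1 : ℤ) else 0) := by
    intro X Y
    refine Finset.sum_congr rfl fun v _ => ?_
    rw [Finset.sum_ite_mem, Finset.sum_const, nsmul_eq_mul, mul_one, Finset.inter_comm]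
  rw [key, key, Finset.sum_comm]
  refine Finset.sum_congr rfl fun w _ => Finset.sum_congr rfl fun v _ => ?_
  exact if_congr (aux_closedNbr_comm G) rfl rfl

/-- maximality yields a witness for each `-1` vertex. -/
lemma aux_witness {f : V → ℤ} (hf : G.MaximalNegativeFn f) {v : V} (hv : f v = -1) :
    ∃ u ∈ G.closedNbr v, 0 ≤ ∑ x ∈ G.closedNbr u, f x := by
  by_contra hcon
  push_neg at hcon
  set g : V → ℤ := Function.update f v 1 with hg
  have hsum : ∀ u : V, ∑ x ∈ G.closedNbr u, g x ≤ 1 := by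
    intro u
    by_cases hvu : v ∈ G.closedNbr u
    · have h1 : ∑ x ∈ G.closedNbr u, g x = 1 + ∑ x ∈ (G.closedNbr u).erase v, f x := by
        rw [hg, Finset.sum_update_of_mem hvu f 1, Finset.sdiff_singleton_eq_erase]
      have h2 : ∑ x ∈ (G.closedNbr u).erase v, f x + f v = ∑ x ∈ G.closedNbr u, f x :=
        Finset.sum_erase_add _ f hvu
      have h3 : ∑ x ∈ G.closedNbr u, f x < 0 := hcon u ((aux_closedNbr_comm G).mp hvu)
      omega
    · have h1 : ∑ x ∈ G.closedNbr u, g x = ∑ x ∈ G.closedNbr u, f x := by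
        refine Finset.sum_congr rfl fun x hx => ?_
        have : x ≠ v := fun h => hvu (h ▸ hx)
        rw [hg]; exact Function.update_of_ne this 1 f
      rw [h1]; exact hf.1.2 u
  have hgneg : G.NegativeFn g := by
    constructor
    · intro u
      by_cases hu : u = v
      · right; rw [hg, hu]; simp
      · rw [hg, Function.update_of_ne hu 1 f]; exact hf.1.1 u
    · exact hsum
  have hle : ∀ u, f u ≤ g u := by
    intro u
    by_cases hu : u = v
    · rw [hg, hu, Function.update_self, hv]; omega
    · rw [hg, Function.update_of_ne hu 1 f]
  have := hf.2 g hgneg hle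
  have hgv : g v = f v := congrFun this v
  rw [hg, Function.update_self, hv] at hgv
  omega

/-- The key combinatorial bound: `#{f = -1} ≤ r · #{f = 1}`. -/
lemma aux_key (r : ℕ) (hdeg : ∀ v : V, G.degree v = r - 1 ∨ G.degree v = r)
    {f : V → ℤ} (hf : G.MaximalNegativeFn f) :
    ((univ.filter (fun v => f v = -1)).card : ℤ)
      ≤ (r : ℤ) * ((univ.filter (fun v => f v = 1)).card : ℤ) := by
  classical
  have hdegle : ∀ v : V, G.degree v ≤ r := fun v => (hdeg v).elim (fun h => h ▸ Nat.sub_le r 1)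
    (fun h => h.le)
  set s : V → ℤ := fun u => ∑ x ∈ G.closedNbr u, f x with hs
  have hs1 : ∀ u, s u ≤ 1 := hf.1.2
  set A : Finset V := univ.filter (fun u => 0 ≤ s u) with hA
  set dA : V → ℕ := fun x => (A ∩ G.closedNbr x).card with hdA
  set Pp : Finset V := univ.filter (fun v => f v = 1) with hPp
  set Mm : Finset V := univ.filter (fun v => f v = -1) with hMm
  set Z : Finset V := Pp.filter (fun w => dA w = r + 1) with hZ
  set Z0 : Finset V := Z.filter (fun w => s w = 0) with hZ0
  set Z1 : Finset V := Z.filter (fun w => s w = 1) with hZ1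
  -- N[w] ⊆ A for w ∈ Z
  have hZsub : ∀ w ∈ Z, G.closedNbr w ⊆ A := by
    intro w hw
    have hw2 : dA w = r + 1 := (Finset.mem_filter.mp hw).2
    have hcard : (G.closedNbr w).card ≤ r + 1 := by
      rw [aux_card_closedNbr]; exact Nat.succ_le_succ (hdegle w)
    have hsub : A ∩ G.closedNbr w ⊆ G.closedNbr w := Finset.inter_subset_right
    have hc2 : (A ∩ G.closedNbr w).card = r + 1 := hw2
    have heq : A ∩ G.closedNbr w = G.closedNbr w :=
      Finset.eq_of_subset_of_card_le hsub (by omega)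
    intro x hx
    rw [← heq] at hx
    exact (Finset.mem_inter.mp hx).1
  have hZA : ∀ w ∈ Z, w ∈ A := fun w hw => hZsub w hw (aux_self_mem_closedNbr G w)
  -- the main identity, by swapping the double sum
  have hid : ∑ u ∈ A, s u = ∑ x ∈ Pp, (dA x : ℤ) - ∑ x ∈ Mm, (dA x : ℤ) := by
    have hsw := aux_swap G A f
    have hsplit : ∑ x : V, f x * ((A ∩ G.closedNbr x).card : ℤ)
        = ∑ x ∈ Pp, f x * (dA x : ℤ) + ∑ x ∈ Mm, f x * (dA x : ℤ) := by
      rw [hPp, hMm]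
      rw [← Finset.sum_filter_add_sum_filter_not univ (fun v => f v = 1)
        (fun x => f x * (dA x : ℤ))]
      congr 1
      refine Finset.sum_congr ?_ fun x _ => rfl
      refine Finset.filter_congr fun x _ => ?_
      rcases hf.1.1 x with h | h <;> simp [h]
    have h1 : ∑ x ∈ Pp, f x * (dA x : ℤ) = ∑ x ∈ Pp, (dA x : ℤ) := by
      refine Finset.sum_congr rfl fun x hx => ?_
      rw [(Finset.mem_filter.mp hx).2, one_mul]
    have h2 : ∑ x ∈ Mm, f x * (dA x : ℤ) = -∑ x ∈ Mm, (dA x : ℤ) := by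
      rw [← Finset.sum_neg_distrib]
      refine Finset.sum_congr rfl fun x hx => ?_
      rw [(Finset.mem_filter.mp hx).2]; ring
    rw [hs, hsw, hsplit, h1, h2]; ring
  -- witness: dA v ≥ 1 for minus vertices
  have hwit : ∀ v ∈ Mm, 1 ≤ dA v := by
    intro v hv
    obtain ⟨u, hu1, hu2⟩ := aux_witness G hf (Finset.mem_filter.mp hv).2
    have : u ∈ A ∩ G.closedNbr v :=
      Finset.mem_inter.mpr ⟨Finset.mem_filter.mpr ⟨Finset.mem_univ u, hu2⟩, hu1⟩
    exact Finset.card_pos.mpr ⟨u, this⟩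
  -- refined lower bound on dA over minus vertices
  have hvA : ∀ v ∈ Mm, (Z0 ∩ G.closedNbr v).card + 1 ≤ dA v := by
    intro v hv
    rcases (Z0 ∩ G.closedNbr v).eq_empty_or_nonempty with he | ⟨w, hw⟩
    · rw [he, Finset.card_empty]; simpa using hwit v hv
    · obtain ⟨hwZ0, hwN⟩ := Finset.mem_inter.mp hw
      have hwZ : w ∈ Z := Finset.mem_filter.mp hwZ0 |>.1
      have hvA' : v ∈ A := hZsub w hwZ ((aux_closedNbr_comm G).mp hwN)
      have hvnot : v ∉ Z0 ∩ G.closedNbr v := by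
        intro hcon
        have : f v = 1 := (Finset.mem_filter.mp
          ((Finset.mem_filter.mp ((Finset.mem_filter.mp (Finset.mem_inter.mp hcon).1).1)).1)).2
        have : f v = -1 := (Finset.mem_filter.mp hv).2
        omega
      have hins : insert v (Z0 ∩ G.closedNbr v) ⊆ A ∩ G.closedNbr v := by
        intro x hx
        rcases Finset.mem_insert.mp hx with rfl | hx
        · exact Finset.mem_inter.mpr ⟨hvA', aux_self_mem_closedNbr G x⟩
        · obtain ⟨hxZ0, hxN⟩ := Finset.mem_inter.mp hx
          exact Finset.mem_inter.mpr ⟨hZA _ (Finset.mem_filter.mp hxZ0).1, hxN⟩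
      have := Finset.card_le_card hins
      rwa [Finset.card_insert_of_notMem hvnot] at this
  -- every w ∈ Z0 has a minus vertex in its closed neighborhood
  have hZ0cov : ∀ w ∈ Z0, 1 ≤ (Mm ∩ G.closedNbr w).card := by
    intro w hw
    by_contra hcon
    push_neg at hcon
    have hempty : Mm ∩ G.closedNbr w = ∅ := Finset.card_eq_zero.mp (by omega)
    have hall : ∀ x ∈ G.closedNbr w, f x = 1 := by
      intro x hx
      rcases hf.1.1 x with h | h
      · exfalso
        have : x ∈ Mm ∩ G.closedNbr w := Finset.mem_inter.mpr
          ⟨Finset.mem_filter.mpr ⟨Finset.mem_univ x, h⟩, hx⟩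
        rw [hempty] at this; exact absurd this (Finset.notMem_empty x)
      · exact h
    have hsw : s w = ((G.closedNbr w).card : ℤ) := by
      have h0 : s w = ∑ x ∈ G.closedNbr w, f x := rfl
      rw [h0, Finset.sum_congr rfl hall, Finset.sum_const, nsmul_eq_mul, mul_one]
    have hcard : 1 ≤ (G.closedNbr w).card :=
      Finset.card_pos.mpr ⟨w, aux_self_mem_closedNbr G w⟩
    have hsw0 : s w = 0 := (Finset.mem_filter.mp hw).2
    omega
  -- Z0 and Z1 partition Z
  have hZpart : Z0.card + Z1.card = Z.card := by
    have h01 : ∀ w ∈ Z, s w = 0 ∨ s w = 1 := by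
      intro w hw
      have h0 : 0 ≤ s w := (Finset.mem_filter.mp (hZA w hw)).2
      have h1 : s w ≤ 1 := hs1 w
      omega
    have := Finset.card_filter_add_card_filter_not (s := Z) (fun w => s w = 0)
    rw [hZ0, hZ1, ← this]
    congr 1
    refine congrArg Finset.card (Finset.filter_congr fun w hw => ?_)
    rcases h01 w hw with h | h <;> simp [h]
  -- a1 ≥ Z1.card
  have ha1 : (Z1.card : ℤ) ≤ ∑ u ∈ A, s u := by
    have hsub : Z1 ⊆ A := fun w hw => hZA w (Finset.mem_filter.mp hw).1
    calc (Z1.card : ℤ) = ∑ w ∈ Z1, (1 : ℤ) := by rw [Finset.sum_const, nsmul_eq_mul, mul_one]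
      _ = ∑ w ∈ Z1, s w := Finset.sum_congr rfl fun w hw => ((Finset.mem_filter.mp hw).2).symm
      _ ≤ ∑ u ∈ A, s u := Finset.sum_le_sum_of_subset_of_nonneg hsub
          (fun u hu _ => (Finset.mem_filter.mp hu).2)
  -- lower bound on the minus side
  have hMlow : (Mm.card : ℤ) + (Z0.card : ℤ) ≤ ∑ x ∈ Mm, (dA x : ℤ) := by
    have h1 : ∑ x ∈ Mm, (dA x : ℤ) ≥ ∑ v ∈ Mm, (((Z0 ∩ G.closedNbr v).card : ℤ) + 1) := by
      refine Finset.sum_le_sum fun v hv => ?_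
      have := hvA v hv
      push_cast
      omega
    have h2 : ∑ v ∈ Mm, (((Z0 ∩ G.closedNbr v).card : ℤ) + 1)
        = ∑ v ∈ Mm, ((Z0 ∩ G.closedNbr v).card : ℤ) + (Mm.card : ℤ) := by
      rw [Finset.sum_add_distrib, Finset.sum_const, nsmul_eq_mul, mul_one]
    have h3 : (Z0.card : ℤ) ≤ ∑ v ∈ Mm, ((Z0 ∩ G.closedNbr v).card : ℤ) := by
      rw [aux_pair_count]
      calc (Z0.card : ℤ) = ∑ w ∈ Z0, (1 : ℤ) := by rw [Finset.sum_const, nsmul_eq_mul, mul_one]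
        _ ≤ ∑ w ∈ Z0, ((Mm ∩ G.closedNbr w).card : ℤ) := Finset.sum_le_sum fun w hw => by
            exact_mod_cast hZ0cov w hw
    omega
  -- upper bound on the plus side
  have hPup : ∑ x ∈ Pp, (dA x : ℤ) ≤ (r : ℤ) * (Pp.card : ℤ) + (Z.card : ℤ) := by
    have h1 : ∀ w ∈ Pp, (dA w : ℤ) ≤ (r : ℤ) + (if dA w = r + 1 then 1 else 0) := by
      intro w _
      have hle : dA w ≤ r + 1 := by
        calc dA w ≤ (G.closedNbr w).card := Finset.card_le_card Finset.inter_subset_right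
          _ ≤ r + 1 := by rw [aux_card_closedNbr]; exact Nat.succ_le_succ (hdegle w)
      by_cases h : dA w = r + 1
      · simp [h]
      · have : dA w ≤ r := by omega
        simp only [h, if_false]
        push_cast
        omega
    calc ∑ x ∈ Pp, (dA x : ℤ) ≤ ∑ w ∈ Pp, ((r : ℤ) + (if dA w = r + 1 then 1 else 0)) :=
          Finset.sum_le_sum h1
      _ = (r : ℤ) * (Pp.card : ℤ) + (Z.card : ℤ) := by
          rw [Finset.sum_add_distrib, Finset.sum_const, nsmul_eq_mul, mul_comm]
          congr 1
          rw [hZ, ← Finset.sum_filter]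
          rw [Finset.sum_const, nsmul_eq_mul, mul_one]
  -- conclude
  have := hid
  have hZc : (Z0.card : ℤ) + (Z1.card : ℤ) = (Z.card : ℤ) := by exact_mod_cast hZpart
  omega

end Aux

theorem stmt_11 {V : Type*} [Fintype V] [DecidableEq V] (G : SimpleGraph V) [DecidableRel G.Adj]
    (r : ℕ) (hdeg : ∀ v : V, G.degree v = r - 1 ∨ G.degree v = r) :
    ∀ f : V → ℤ, G.MaximalNegativeFn f →
      (∑ v : V, (f v : ℝ)) ≥ (1 - (r : ℝ)) * (Fintype.card V : ℝ) / (1 + (r : ℝ)) := by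
  intro f hf
  classical
  set Pp : Finset V := univ.filter (fun v => f v = 1) with hPp
  set Mm : Finset V := univ.filter (fun v => f v = -1) with hMm
  have hkey := aux_key G r hdeg hf
  have hcard : Pp.card + Mm.card = Fintype.card V := by
    have h0 := Finset.card_filter_add_card_filter_not (s := (univ : Finset V))
      (fun v => f v = 1)
    have heq : (univ.filter (fun v => ¬ f v = 1)) = Mm := by
      rw [hMm]
      exact Finset.filter_congr fun x _ => by rcases hf.1.1 x with h | h <;> simp [h]
    rw [heq, Finset.card_univ] at h0
    rw [hPp, hMm] at *
    exact h0
  have hsum : ∑ v : V, f v = (Pp.card : ℤ) - (Mm.card : ℤ) := by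
    rw [← Finset.sum_filter_add_sum_filter_not univ (fun v => f v = 1) f]
    have h1 : ∑ v ∈ univ.filter (fun v => f v = 1), f v = (Pp.card : ℤ) := by
      rw [hPp]
      rw [Finset.sum_congr rfl (fun v hv => (Finset.mem_filter.mp hv).2)]
      rw [Finset.sum_const, nsmul_eq_mul, mul_one]
    have h2 : ∑ v ∈ univ.filter (fun v => ¬ f v = 1), f v = -(Mm.card : ℤ) := by
      have heq : univ.filter (fun v => ¬ f v = 1) = Mm := by
        rw [hMm]
        refine Finset.filter_congr fun x _ => ?_
        rcases hf.1.1 x with h | h <;> simp [h]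
      rw [heq]
      rw [Finset.sum_congr rfl (fun v hv => (Finset.mem_filter.mp hv).2)]
      rw [Finset.sum_const, nsmul_eq_mul]
      ring
    rw [h1, h2]
    ring
  have hsumR : ∑ v : V, (f v : ℝ) = (Pp.card : ℝ) - (Mm.card : ℝ) := by
    rw [← Int.cast_sum]
    rw [hsum]
    push_cast
    ring
  have hkeyR : (Mm.card : ℝ) ≤ (r : ℝ) * (Pp.card : ℝ) := by exact_mod_cast hkey
  have hcardR : (Pp.card : ℝ) + (Mm.card : ℝ) = (Fintype.card V : ℝ) := by exact_mod_cast hcard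
  rw [ge_iff_le, div_le_iff₀ (by positivity : (0 : ℝ) < 1 + r)]
  rw [hsumR, ← hcardR]
  nlinarith [hkeyR]
end

section
/- Let G be a finite simple graph with minimum degree δ and maximum degree Δ, and suppose Δ ≥ δ + 1 or both δ = Δ and Δ is odd. Then β*_N(G) ≥ (1-Δ)n/(1+Δ), where n is the order of G, and this bound is tighter than (δ+2+δΔ-2Δ²)n/(δ+2-δΔ+2Δ²) when δ is even and tighter than (δ+1-Δ+δΔ-2Δ²)n/(δ+1+Δ-δΔ+2Δ²) when δ is odd. -/
open Finset

namespace Aux13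
variable {V : Type*} [Fintype V] [DecidableEq V] (G : SimpleGraph V) [DecidableRel G.Adj]

lemma mem_closedNbr_comm {u v : V} : u ∈ G.closedNbr v ↔ v ∈ G.closedNbr u := by
  simp only [SimpleGraph.closedNbr, mem_insert, SimpleGraph.mem_neighborFinset]
  constructor
  · rintro (rfl | h)
    · exact Or.inl rfl
    · exact Or.inr h.symm
  · rintro (rfl | h)
    · exact Or.inl rfl
    · exact Or.inr h.symm

lemma self_mem_closedNbr (v : V) : v ∈ G.closedNbr v := by
  simp [SimpleGraph.closedNbr]

lemma card_closedNbr (v : V) : (G.closedNbr v).card = G.degree v + 1 := by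
  rw [SimpleGraph.closedNbr, card_insert_of_notMem (by simp), G.card_neighborFinset_eq_degree]

lemma dc (A B : Finset V) :
    ∑ u ∈ A, (G.closedNbr u ∩ B).card = ∑ v ∈ B, (G.closedNbr v ∩ A).card := by
  have h : ∀ (X : Finset V) (u : V), (G.closedNbr u ∩ X).card
      = ∑ v ∈ X, if v ∈ G.closedNbr u then 1 else 0 := by
    intro X u
    rw [inter_comm, ← filter_mem_eq_inter, card_filter]
  simp only [h]
  rw [Finset.sum_comm]
  exact Finset.sum_congr rfl fun v _ => Finset.sum_congr rfl fun u _ =>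
    if_congr (mem_closedNbr_comm G) rfl rfl

lemma witness (f : V → ℤ) (hf : G.MaximalNegativeFn f) (m : V) (hm : f m = -1) :
    ∃ u ∈ G.closedNbr m, 0 ≤ ∑ w ∈ G.closedNbr u, f w := by
  by_contra hcon
  push_neg at hcon
  set g : V → ℤ := Function.update f m 1 with hg
  have hgneg : G.NegativeFn g := by
    constructor
    · intro v
      by_cases hv : v = m
      · subst hv; right; simp [hg]
      · rw [hg, Function.update_of_ne hv]; exact hf.1.1 v
    · intro v
      by_cases hv : m ∈ G.closedNbr v
      · have hsum : ∑ u ∈ G.closedNbr v, g u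
            = 1 + ∑ u ∈ G.closedNbr v \ {m}, f u := by
          rw [hg, Finset.sum_update_of_mem hv]
        have h2 : ∑ u ∈ G.closedNbr v \ {m}, f u + f m = ∑ u ∈ G.closedNbr v, f u :=
          Finset.sum_eq_sum_sdiff_singleton_add hv f ▸ rfl
        have h3 : ∑ u ∈ G.closedNbr v, f u ≤ -1 := by
          have := hcon v ((mem_closedNbr_comm G).mp hv)
          omega
        omega
      · have : ∑ u ∈ G.closedNbr v, g u = ∑ u ∈ G.closedNbr v, f u := by
          refine Finset.sum_congr rfl fun u hu => ?_
          rw [hg, Function.update_of_ne]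
          rintro rfl; exact hv hu
        rw [this]; exact hf.1.2 v
  have hge : ∀ v, f v ≤ g v := by
    intro v
    by_cases hv : v = m
    · subst hv; simp [hg, hm]
    · rw [hg, Function.update_of_ne hv]
  have heq := hf.2 g hgneg hge
  have : g m = f m := by rw [heq]
  simp [hg, hm] at this

lemma key (f : V → ℤ) (hf : G.MaximalNegativeFn f) :
    ((univ.filter fun v => f v = -1).card : ℤ)
      ≤ (G.maxDegree : ℤ) * (univ.filter fun v => f v = 1).card := by
  classical
  set P : Finset V := univ.filter fun v => f v = 1 with hP
  set M : Finset V := univ.filter fun v => f v = -1 with hM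
  set s : V → ℤ := fun v => ∑ u ∈ G.closedNbr v, f u with hsdef
  set T : Finset V := univ.filter fun v => 0 ≤ s v with hT
  have hval := hf.1.1
  -- split of s into P and M parts
  have hsplit : ∀ v : V, s v = ((G.closedNbr v ∩ P).card : ℤ) - (G.closedNbr v ∩ M).card := by
    intro v
    have e1 : G.closedNbr v ∩ P = (G.closedNbr v).filter fun u => f u = 1 := by
      ext u; simp [hP, Finset.mem_filter]
    have e2 : G.closedNbr v ∩ M = (G.closedNbr v).filter fun u => f u = -1 := by
      ext u; simp [hM, Finset.mem_filter]
    have e3 : ((G.closedNbr v).filter fun u => ¬ f u = 1)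
        = (G.closedNbr v).filter fun u => f u = -1 := by
      refine Finset.filter_congr fun u _ => ?_
      rcases hval u with h | h <;> simp [h]
    have hA : ∑ u ∈ (G.closedNbr v).filter (fun u => f u = 1), f u
        = (((G.closedNbr v).filter fun u => f u = 1).card : ℤ) := by
      rw [Finset.sum_congr rfl (fun u hu => (Finset.mem_filter.mp hu).2)]
      simp
    have hB : ∑ u ∈ (G.closedNbr v).filter (fun u => ¬ f u = 1), f u
        = -((((G.closedNbr v).filter fun u => f u = -1).card : ℤ)) := by
      rw [e3, Finset.sum_congr rfl (fun u hu => (Finset.mem_filter.mp hu).2)]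
      simp
    show (∑ u ∈ G.closedNbr v, f u) = _
    rw [← Finset.sum_filter_add_sum_filter_not (G.closedNbr v) (fun u => f u = 1), hA, hB,
      e1, e2]
    ring
  -- closed neighborhood sizes
  have hsize : ∀ v : V, (G.closedNbr v ∩ P).card + (G.closedNbr v ∩ M).card
      = G.degree v + 1 := by
    intro v
    rw [← card_closedNbr]
    have hdisj : Disjoint (G.closedNbr v ∩ P) (G.closedNbr v ∩ M) := by
      rw [Finset.disjoint_left]
      intro a ha hb
      have h1 : f a = 1 := by
        have := (Finset.mem_inter.mp ha).2; simp [hP] at this; exact this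
      have h2 : f a = -1 := by
        have := (Finset.mem_inter.mp hb).2; simp [hM] at this; exact this
      omega
    rw [← Finset.card_union_of_disjoint hdisj]
    congr 1
    ext u
    simp only [Finset.mem_union, Finset.mem_inter, hP, hM, Finset.mem_filter, Finset.mem_univ,
      true_and]
    rcases hval u with h | h <;> simp [h]
  have hcardN : ∀ v : V, (G.closedNbr v).card ≤ G.maxDegree + 1 := by
    intro v; rw [card_closedNbr]; exact Nat.add_le_add_right (G.degree_le_maxDegree v) 1
  -- bad vertices
  set bad : Finset V := P.filter (fun p => G.maxDegree + 1 ≤ (G.closedNbr p ∩ T).card)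
    with hbad
  have hbadT : ∀ p ∈ bad, G.closedNbr p ⊆ T := by
    intro p hp
    have h1 := (Finset.mem_filter.mp hp).2
    have h2 : (G.closedNbr p ∩ T).card ≤ (G.closedNbr p).card :=
      Finset.card_le_card (Finset.inter_subset_left)
    have h3 : G.closedNbr p ∩ T = G.closedNbr p :=
      Finset.eq_of_subset_of_card_le Finset.inter_subset_left (le_trans (hcardN p) h1)
    intro u hu
    rw [← h3] at hu
    exact (Finset.mem_inter.mp hu).2
  -- every M vertex is covered by T
  have hMcov : ∀ m ∈ M, 1 ≤ (G.closedNbr m ∩ T).card := by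
    intro m hm
    have hfm : f m = -1 := by
      have := Finset.mem_filter.mp hm; exact this.2
    obtain ⟨u, hu, hsu⟩ := witness G f hf m hfm
    have hmem : u ∈ G.closedNbr m ∩ T :=
      Finset.mem_inter.mpr ⟨hu, Finset.mem_filter.mpr ⟨Finset.mem_univ u, hsu⟩⟩
    exact Finset.card_pos.mpr ⟨u, hmem⟩
  -- main identity
  have main_eq : (M.card : ℤ) + ∑ m ∈ M, (((G.closedNbr m ∩ T).card : ℤ) - 1)
      = ∑ p ∈ P, ((G.closedNbr p ∩ T).card : ℤ) - ∑ u ∈ T, s u := by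
    have hA : (M.card : ℤ) + ∑ m ∈ M, (((G.closedNbr m ∩ T).card : ℤ) - 1)
        = ∑ m ∈ M, ((G.closedNbr m ∩ T).card : ℤ) := by
      rw [Finset.sum_sub_distrib, Finset.sum_const, nsmul_eq_mul, mul_one]
      ring
    have hB : ∑ m ∈ M, ((G.closedNbr m ∩ T).card : ℤ)
        = ∑ u ∈ T, ((G.closedNbr u ∩ M).card : ℤ) := by
      exact_mod_cast dc G M T
    have hC : ∑ u ∈ T, ((G.closedNbr u ∩ M).card : ℤ)
        = ∑ u ∈ T, ((G.closedNbr u ∩ P).card : ℤ) - ∑ u ∈ T, s u := by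
      rw [← Finset.sum_sub_distrib]
      exact Finset.sum_congr rfl fun u _ => by rw [hsplit u]; ring
    have hD : ∑ u ∈ T, ((G.closedNbr u ∩ P).card : ℤ)
        = ∑ p ∈ P, ((G.closedNbr p ∩ T).card : ℤ) := by
      exact_mod_cast dc G T P
    rw [hA, hB, hC, hD]
  -- bound on the P side
  have hE : ∑ p ∈ P, ((G.closedNbr p ∩ T).card : ℤ)
      ≤ (G.maxDegree : ℤ) * P.card + bad.card := by
    have hsplitP := Finset.sum_filter_add_sum_filter_not P
      (fun p => G.maxDegree + 1 ≤ (G.closedNbr p ∩ T).card)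
      (fun p => ((G.closedNbr p ∩ T).card : ℤ))
    have h1 : ∑ p ∈ bad, ((G.closedNbr p ∩ T).card : ℤ)
        ≤ (bad.card : ℤ) * (G.maxDegree + 1) := by
      calc ∑ p ∈ bad, ((G.closedNbr p ∩ T).card : ℤ)
          ≤ ∑ _p ∈ bad, ((G.maxDegree : ℤ) + 1) := by
            refine Finset.sum_le_sum fun p _ => ?_
            have h2 : (G.closedNbr p ∩ T).card ≤ G.maxDegree + 1 :=
              le_trans (Finset.card_le_card Finset.inter_subset_left) (hcardN p)
            exact_mod_cast h2
        _ = (bad.card : ℤ) * (G.maxDegree + 1) := by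
            rw [Finset.sum_const, nsmul_eq_mul]
    have h2 : ∑ p ∈ P.filter (fun p => ¬ G.maxDegree + 1 ≤ (G.closedNbr p ∩ T).card),
        ((G.closedNbr p ∩ T).card : ℤ)
        ≤ ((P.filter (fun p => ¬ G.maxDegree + 1 ≤ (G.closedNbr p ∩ T).card)).card : ℤ)
          * G.maxDegree := by
      calc _ ≤ ∑ _p ∈ P.filter (fun p => ¬ G.maxDegree + 1 ≤ (G.closedNbr p ∩ T).card),
            ((G.maxDegree : ℤ)) := by
            refine Finset.sum_le_sum fun p hp => ?_
            have h3 := (Finset.mem_filter.mp hp).2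
            have h4 : (G.closedNbr p ∩ T).card ≤ G.maxDegree := by omega
            exact_mod_cast h4
        _ = _ := by rw [Finset.sum_const, nsmul_eq_mul]
    have hc : (bad.card : ℤ)
        + ((P.filter (fun p => ¬ G.maxDegree + 1 ≤ (G.closedNbr p ∩ T).card)).card : ℤ)
        = P.card := by
      exact_mod_cast Finset.card_filter_add_card_filter_not
        (s := P) (p := fun p => G.maxDegree + 1 ≤ (G.closedNbr p ∩ T).card)
    rw [← hsplitP]
    have : (bad.card : ℤ) * (G.maxDegree + 1)
        + ((P.filter (fun p => ¬ G.maxDegree + 1 ≤ (G.closedNbr p ∩ T).card)).card : ℤ)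
          * G.maxDegree
        = (G.maxDegree : ℤ) * P.card + bad.card := by
      linear_combination (G.maxDegree : ℤ) * hc
    linarith [h1, h2]
  -- the bad vertices with positive s
  have hG1 : ((bad.filter fun p => 1 ≤ s p).card : ℤ) ≤ ∑ u ∈ T, s u := by
    have hsub : bad.filter (fun p => 1 ≤ s p) ⊆ T := fun p hp =>
      (hbadT p (Finset.filter_subset _ _ hp)) (self_mem_closedNbr G p)
    calc ((bad.filter fun p => 1 ≤ s p).card : ℤ)
        = ∑ _p ∈ bad.filter (fun p => 1 ≤ s p), (1 : ℤ) := by simp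
      _ ≤ ∑ p ∈ bad.filter (fun p => 1 ≤ s p), s p :=
          Finset.sum_le_sum fun p hp => (Finset.mem_filter.mp hp).2
      _ ≤ ∑ u ∈ T, s u := Finset.sum_le_sum_of_subset_of_nonneg hsub
          (fun u hu _ => (Finset.mem_filter.mp hu).2)
  -- the bad vertices with nonpositive s
  have hH : ((bad.filter fun p => ¬ 1 ≤ s p).card : ℤ)
      ≤ ∑ m ∈ M, (((G.closedNbr m ∩ T).card : ℤ) - 1) := by
    set bad0 : Finset V := bad.filter (fun p => ¬ 1 ≤ s p) with hbad0
    set MT : Finset V := M ∩ T with hMT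
    have hbad0P : ∀ p ∈ bad0, f p = 1 := by
      intro p hp
      have h1 : p ∈ P := Finset.filter_subset _ _ (Finset.filter_subset _ _ hp)
      exact (Finset.mem_filter.mp h1).2
    have h3 : ∀ m ∈ MT, ((G.closedNbr m ∩ bad0).card : ℤ)
        ≤ ((G.closedNbr m ∩ T).card : ℤ) - 1 := by
      intro m hm
      have hmM : m ∈ M := (Finset.mem_inter.mp hm).1
      have hmT : m ∈ T := (Finset.mem_inter.mp hm).2
      have hins : insert m (G.closedNbr m ∩ bad0) ⊆ G.closedNbr m ∩ T := by
        intro x hx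
        rcases Finset.mem_insert.mp hx with rfl | hx
        · exact Finset.mem_inter.mpr ⟨self_mem_closedNbr G x, hmT⟩
        · rcases Finset.mem_inter.mp hx with ⟨h1, h2⟩
          exact Finset.mem_inter.mpr ⟨h1,
            hbadT _ (Finset.filter_subset _ _ h2) (self_mem_closedNbr G _)⟩
      have hnot : m ∉ G.closedNbr m ∩ bad0 := by
        intro hx
        have h1 := hbad0P m (Finset.mem_inter.mp hx).2
        have h2 : f m = -1 := (Finset.mem_filter.mp hmM).2
        omega
      have hcard := Finset.card_le_card hins
      rw [Finset.card_insert_of_notMem hnot] at hcard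
      push_cast
      omega
    have h4 : ∑ m ∈ MT, ((G.closedNbr m ∩ bad0).card : ℤ)
        = ∑ p ∈ bad0, ((G.closedNbr p ∩ MT).card : ℤ) := by
      exact_mod_cast dc G MT bad0
    have h5 : ∀ p ∈ bad0, (1 : ℤ) ≤ ((G.closedNbr p ∩ MT).card : ℤ) := by
      intro p hp
      have hpbad : p ∈ bad := Finset.filter_subset _ _ hp
      have hsubT := hbadT p hpbad
      have heq : G.closedNbr p ∩ MT = G.closedNbr p ∩ M := by
        ext x
        simp only [hMT, Finset.mem_inter]
        constructor
        · rintro ⟨h1, h2, _⟩; exact ⟨h1, h2⟩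
        · rintro ⟨h1, h2⟩; exact ⟨h1, h2, hsubT h1⟩
      rw [heq]
      have hsp : s p ≤ 0 := by
        have := (Finset.mem_filter.mp hp).2; omega
      have hP1 := hsplit p
      have hs2 := hsize p
      have hdeg : G.maxDegree ≤ G.degree p := by
        have h1 := (Finset.mem_filter.mp hpbad).2
        have h2 : (G.closedNbr p ∩ T).card ≤ (G.closedNbr p).card :=
          Finset.card_le_card Finset.inter_subset_left
        rw [card_closedNbr] at h2
        omega
      have : 1 ≤ (G.closedNbr p ∩ M).card := by omega
      exact_mod_cast this
    calc ((bad0.card : ℤ))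
        = ∑ _p ∈ bad0, (1 : ℤ) := by simp
      _ ≤ ∑ p ∈ bad0, ((G.closedNbr p ∩ MT).card : ℤ) := Finset.sum_le_sum h5
      _ = ∑ m ∈ MT, ((G.closedNbr m ∩ bad0).card : ℤ) := h4.symm
      _ ≤ ∑ m ∈ MT, (((G.closedNbr m ∩ T).card : ℤ) - 1) := Finset.sum_le_sum h3
      _ ≤ ∑ m ∈ M, (((G.closedNbr m ∩ T).card : ℤ) - 1) := by
          refine Finset.sum_le_sum_of_subset_of_nonneg Finset.inter_subset_left
            (fun m hm _ => ?_)
          have := hMcov m hm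
          push_cast
          omega
  have hI : (bad.card : ℤ)
      = ((bad.filter fun p => 1 ≤ s p).card : ℤ)
        + ((bad.filter fun p => ¬ 1 ≤ s p).card : ℤ) := by
    exact_mod_cast (Finset.card_filter_add_card_filter_not
      (s := bad) (p := fun p => 1 ≤ s p)).symm
  linarith [main_eq, hE, hG1, hH, hI]

end Aux13

theorem stmt_13 {V : Type*} [Fintype V] [DecidableEq V] (G : SimpleGraph V) [DecidableRel G.Adj]
    (hδ : 1 ≤ G.minDegree)
    (hcase : G.minDegree + 1 ≤ G.maxDegree ∨ (G.minDegree = G.maxDegree ∧ Odd G.maxDegree)) :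
    (∀ f : V → ℤ, G.MaximalNegativeFn f →
        (∑ v : V, (f v : ℝ)) ≥
          (1 - (G.maxDegree : ℝ)) * (Fintype.card V : ℝ) / (1 + (G.maxDegree : ℝ))) ∧
      (Even G.minDegree →
        (1 - (G.maxDegree : ℝ)) * (Fintype.card V : ℝ) / (1 + (G.maxDegree : ℝ)) ≥
          ((G.minDegree : ℝ) + 2 + (G.minDegree : ℝ) * (G.maxDegree : ℝ)
              - 2 * (G.maxDegree : ℝ) ^ 2) * (Fintype.card V : ℝ) /
            ((G.minDegree : ℝ) + 2 - (G.minDegree : ℝ) * (G.maxDegree : ℝ)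
              + 2 * (G.maxDegree : ℝ) ^ 2)) ∧
      (Odd G.minDegree →
        (1 - (G.maxDegree : ℝ)) * (Fintype.card V : ℝ) / (1 + (G.maxDegree : ℝ)) ≥
          ((G.minDegree : ℝ) + 1 - (G.maxDegree : ℝ)
              + (G.minDegree : ℝ) * (G.maxDegree : ℝ) - 2 * (G.maxDegree : ℝ) ^ 2)
            * (Fintype.card V : ℝ) /
            ((G.minDegree : ℝ) + 1 + (G.maxDegree : ℝ)
              - (G.minDegree : ℝ) * (G.maxDegree : ℝ) + 2 * (G.maxDegree : ℝ) ^ 2)) := by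
  have hδΔ : G.minDegree ≤ G.maxDegree := by
    rcases hcase with h | ⟨h, _⟩ <;> omega
  have hΔ1 : 1 ≤ G.maxDegree := le_trans hδ hδΔ
  set D : ℝ := (G.maxDegree : ℝ) with hD
  set d : ℝ := (G.minDegree : ℝ) with hd
  have hD1 : (1 : ℝ) ≤ D := by rw [hD]; exact_mod_cast hΔ1
  have hdD : d ≤ D := by rw [hD, hd]; exact_mod_cast hδΔ
  have hd1 : (1 : ℝ) ≤ d := by rw [hd]; exact_mod_cast hδ
  have hn : (0 : ℝ) ≤ (Fintype.card V : ℝ) := by positivity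
  have hc1 : (0 : ℝ) < 1 + D := by linarith
  refine ⟨?_, ?_, ?_⟩
  · intro f hf
    have hkey := Aux13.key G f hf
    set P : Finset V := Finset.univ.filter fun v => f v = 1 with hP
    set M : Finset V := Finset.univ.filter fun v => f v = -1 with hM
    have hval := hf.1.1
    have hMeq : Finset.univ.filter (fun v => ¬ f v = 1) = M := by
      refine Finset.filter_congr fun v _ => ?_
      rcases hval v with h | h <;> simp [h]
    have hsum : ∑ v : V, f v = (P.card : ℤ) - M.card := by
      rw [← Finset.sum_filter_add_sum_filter_not Finset.univ (fun v => f v = 1), hMeq]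
      have hA : ∑ v ∈ P, f v = (P.card : ℤ) := by
        rw [Finset.sum_congr rfl (fun v hv => (Finset.mem_filter.mp hv).2)]
        simp
        rfl
      have hB : ∑ v ∈ M, f v = -(M.card : ℤ) := by
        rw [Finset.sum_congr rfl (fun v hv => (Finset.mem_filter.mp hv).2)]
        simp
        rfl
      rw [hA, hB]
      ring
    have hcard : (Fintype.card V : ℤ) = (P.card : ℤ) + M.card := by
      have h0 := Finset.card_filter_add_card_filter_not
        (s := (Finset.univ : Finset V)) (p := fun v => f v = 1)
      rw [hMeq] at h0
      have h2 : P.card + M.card = Fintype.card V := by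
        rw [← Finset.card_univ]; exact h0
      exact_mod_cast h2.symm
    have hsumR : ∑ v : V, (f v : ℝ) = ((P.card : ℝ)) - M.card := by
      have : ((∑ v : V, f v : ℤ) : ℝ) = ((P.card : ℝ)) - M.card := by
        rw [hsum]; push_cast; ring
      rw [← this]; push_cast; ring
    have hcardR : (Fintype.card V : ℝ) = ((P.card : ℝ)) + M.card := by
      exact_mod_cast hcard
    have hkeyR : ((M.card : ℝ)) ≤ D * P.card := by rw [hD]; exact_mod_cast hkey
    rw [ge_iff_le, div_le_iff₀ hc1, hsumR, hcardR]
    nlinarith [hkeyR]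
  · intro heven
    have hlt : G.minDegree + 1 ≤ G.maxDegree := by
      rcases hcase with h | ⟨h1, h2⟩
      · exact h
      · rw [h1] at heven
        exact absurd h2 (Nat.not_odd_iff_even.mpr heven)
    have hltR : d + 1 ≤ D := by rw [hD, hd]; exact_mod_cast hlt
    have hc2 : (0 : ℝ) < d + 2 - d * D + 2 * D ^ 2 := by nlinarith
    rw [ge_iff_le, div_le_div_iff₀ hc2 hc1]
    nlinarith [mul_nonneg (mul_nonneg (by linarith : (0:ℝ) ≤ D)
      (by linarith : (0:ℝ) ≤ D - d - 1)) hn]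
  · intro _
    have hc3 : (0 : ℝ) < d + 1 + D - d * D + 2 * D ^ 2 := by nlinarith
    rw [ge_iff_le, div_le_div_iff₀ hc3 hc1]
    nlinarith [mul_nonneg (mul_nonneg (by linarith : (0:ℝ) ≤ D)
      (by linarith : (0:ℝ) ≤ 2 * D - 2 * d + 1)) hn]
end

section
/- Let f be a maximal negative function on a finite simple graph G, and let A₀ = {v : f(v) = -1 and v has no neighbor in P}, where P = {u : f(u) = 1}. If A₀ is nonempty, then there exists a vertex u adjacent to some vertex of A₀ (or in A₀) with f(N[u]) ∈ {0, 1}, and necessarily f(u) = -1 with u having at least one neighbor in P. -/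
open Finset

theorem stmt_16 {V : Type*} [Fintype V] [DecidableEq V] (G : SimpleGraph V) [DecidableRel G.Adj]
    (f : V → ℤ) (hf : G.MaximalNegativeFn f)
    (A₀ : Finset V)
    (hA₀ : A₀ = univ.filter (fun u => f u = -1 ∧ ∀ w ∈ G.neighborFinset u, f w ≠ 1))
    (hne : A₀.Nonempty) :
    ∃ u : V, (u ∈ A₀ ∨ ∃ w ∈ A₀, G.Adj u w) ∧
      (∑ w ∈ G.closedNbr u, f w = 0 ∨ ∑ w ∈ G.closedNbr u, f w = 1) ∧
      f u = -1 ∧ ∃ p ∈ G.neighborFinset u, f p = 1 := by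
  obtain ⟨v, hv⟩ := hne
  rw [hA₀, mem_filter] at hv
  obtain ⟨-, hfv, hnbrs⟩ := hv
  obtain ⟨⟨hpm, hsum⟩, hmax⟩ := hf
  set g : V → ℤ := Function.update f v 1 with hg
  have hgv : g v = 1 := Function.update_self v 1 f
  have hgne : g ≠ f := by
    intro h
    have := congrFun h v
    rw [hgv, hfv] at this; omega
  have hge : ∀ w, f w ≤ g w := by
    intro w
    by_cases hw : w = v
    · subst hw; rw [hgv, hfv]; omega
    · rw [hg, Function.update_of_ne hw]
  have hgnot : ¬ G.NegativeFn g := fun hneg => hgne (hmax g hneg hge)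
  have hgpm : ∀ w, g w = -1 ∨ g w = 1 := by
    intro w
    by_cases hw : w = v
    · subst hw; right; exact hgv
    · rw [hg, Function.update_of_ne hw]; exact hpm w
  -- so the sum condition fails for g at some u
  have : ∃ u, 1 < ∑ w ∈ G.closedNbr u, g w := by
    by_contra h
    push_neg at h
    exact hgnot ⟨hgpm, h⟩
  obtain ⟨u, hu⟩ := this
  have hvmem : v ∈ G.closedNbr u := by
    by_contra hvn
    have : ∑ w ∈ G.closedNbr u, g w = ∑ w ∈ G.closedNbr u, f w := by
      apply Finset.sum_congr rfl
      intro w hw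
      rw [hg, Function.update_of_ne (fun h : w = v => hvn (h ▸ hw))]
    have := hsum u
    omega
  have hsg : ∑ w ∈ G.closedNbr u, g w = ∑ w ∈ G.closedNbr u, f w + 2 := by
    rw [hg, Finset.sum_update_of_mem hvmem, Finset.sdiff_singleton_eq_erase,
      ← Finset.add_sum_erase _ f hvmem, hfv]
    ring
  have hfs0 : ∑ w ∈ G.closedNbr u, f w = 0 ∨ ∑ w ∈ G.closedNbr u, f w = 1 := by
    have h1 := hsum u
    have h2 : 0 ≤ ∑ w ∈ G.closedNbr u, f w := by omega
    omega
  -- u ∈ N[v] : u = v or adjacent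
  have hunv : u = v ∨ G.Adj u v := by
    rcases Finset.mem_insert.mp hvmem with h | h
    · left; exact h.symm
    · right; exact (G.mem_neighborFinset u v).mp h
  have hfu : f u = -1 := by
    rcases hunv with h | h
    · rw [h]; exact hfv
    · have : u ∈ G.neighborFinset v := (G.mem_neighborFinset v u).mpr h.symm
      rcases hpm u with h' | h'
      · exact h'
      · exact absurd h' (hnbrs u this)
  have humem : u ∈ G.closedNbr u := Finset.mem_insert_self u _
  have hp : ∃ p ∈ G.neighborFinset u, f p = 1 := by
    by_contra h
    push_neg at h
    have hall : ∀ w ∈ G.closedNbr u, f w = -1 := by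
      intro w hw
      rcases Finset.mem_insert.mp hw with h' | h'
      · rw [h']; exact hfu
      · rcases hpm w with h'' | h''
        · exact h''
        · exact absurd h'' (h w h')
    have : ∑ w ∈ G.closedNbr u, f w = - (G.closedNbr u).card := by
      rw [Finset.sum_congr rfl hall]; simp
    have hcard : 0 < (G.closedNbr u).card := Finset.card_pos.mpr ⟨u, humem⟩
    omega
  refine ⟨u, ?_, hfs0, hfu, hp⟩
  rcases hunv with h | h
  · left; rw [h, hA₀, mem_filter]; exact ⟨mem_univ v, hfv, hnbrs⟩
  · right; exact ⟨v, by rw [hA₀, mem_filter]; exact ⟨mem_univ v, hfv, hnbrs⟩, h⟩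
end

section
/- Let G be a finite simple graph of order n with maximum degree Δ, let f be a maximal negative function, and let aᵢ = |Aᵢ| where Aᵢ is the set of vertices v with f(v) = -1 having exactly i neighbors in P = {u : f(u) = 1}. Then n ≤ |P| + Σ_{i≥1} i·aᵢ ≤ |P|(1+Δ). -/
open Finset

set_option linter.unusedSectionVars false

section Aux

variable {V : Type*} [Fintype V] [DecidableEq V] (G : SimpleGraph V) [DecidableRel G.Adj]
  (f : V → ℤ)

/-- number of +1 neighbors -/
def dP (v : V) : ℕ := ((G.neighborFinset v).filter (fun u => f u = 1)).card

lemma dP_le_degree (v : V) : dP G f v ≤ G.degree v :=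
  card_le_card (filter_subset _ _)

lemma card_filter_neg_eq (h1 : ∀ v, f v = -1 ∨ f v = 1) (s : Finset V) :
    (s.filter (fun u => f u = -1)).card + (s.filter (fun u => f u = 1)).card = s.card := by
  have := Finset.card_filter_add_card_filter_not (s := s) (p := fun u => f u = 1)
  rw [add_comm] at this
  convert this using 3
  ext u
  rcases h1 u with h | h <;> simp [h]

lemma sum_pm (h1 : ∀ v, f v = -1 ∨ f v = 1) (s : Finset V) :
    ∑ u ∈ s, f u = 2 * ((s.filter (fun u => f u = 1)).card : ℤ) - s.card := by
  rw [← Finset.sum_filter_add_sum_filter_not s (fun u => f u = 1)]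
  have h2 : s.filter (fun u => ¬ f u = 1) = s.filter (fun u => f u = -1) := by
    ext u; rcases h1 u with h | h <;> simp [h]
  rw [h2, Finset.sum_congr rfl (fun x hx => (mem_filter.mp hx).2),
    Finset.sum_congr rfl (fun x hx => (mem_filter.mp hx).2)]
  simp only [Finset.sum_const, nsmul_eq_mul, mul_one, mul_neg_one]
  have := card_filter_neg_eq f h1 s
  have : ((s.filter (fun u => f u = -1)).card : ℤ) + (s.filter (fun u => f u = 1)).card
      = (s.card : ℤ) := by exact_mod_cast congrArg (Nat.cast : ℕ → ℤ) this
  linarith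

lemma sum_closedNbr_eq (h1 : ∀ v, f v = -1 ∨ f v = 1) (v : V) :
    ∑ u ∈ G.closedNbr v, f u = f v + 2 * (dP G f v : ℤ) - G.degree v := by
  rw [SimpleGraph.closedNbr, Finset.sum_insert (by simp), sum_pm f h1]
  rw [SimpleGraph.degree, dP]
  ring

lemma mem_closedNbr_comm_s17 {u v : V} : u ∈ G.closedNbr v ↔ v ∈ G.closedNbr u := by
  simp only [SimpleGraph.closedNbr, mem_insert, SimpleGraph.mem_neighborFinset]
  constructor <;> rintro (h | h)
  · exact Or.inl h.symm
  · exact Or.inr h.symm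
  · exact Or.inl h.symm
  · exact Or.inr h.symm

lemma witness (hf : G.MaximalNegativeFn f) (v : V) (hv : f v = -1) :
    ∃ u ∈ G.closedNbr v, 0 ≤ ∑ w ∈ G.closedNbr u, f w := by
  classical
  set g : V → ℤ := Function.update f v 1 with hg
  have hgv : g v = 1 := Function.update_self v 1 f
  have hgne : g ≠ f := fun h => by rw [h] at hgv; omega
  have hge : ∀ w, f w ≤ g w := by
    intro w
    by_cases hw : w = v
    · subst hw; rw [hgv, hv]; omega
    · rw [hg, Function.update_of_ne hw]
  have hg1 : ∀ w, g w = -1 ∨ g w = 1 := by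
    intro w
    by_cases hw : w = v
    · subst hw; right; exact hgv
    · rw [hg, Function.update_of_ne hw]; exact hf.1.1 w
  have hgneg : ¬ G.NegativeFn g := fun h => hgne (hf.2 g h hge)
  rw [SimpleGraph.NegativeFn, not_and_or] at hgneg
  rcases hgneg with h | h
  · exact absurd hg1 h
  push_neg at h
  obtain ⟨u, hu⟩ := h
  refine ⟨u, ?_, ?_⟩
  · rw [mem_closedNbr_comm_s17]
    by_contra hvu
    have : ∑ w ∈ G.closedNbr u, g w = ∑ w ∈ G.closedNbr u, f w := by
      apply Finset.sum_congr rfl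
      intro w hw
      rw [hg, Function.update_of_ne]
      rintro rfl; exact hvu hw
    rw [this] at hu
    exact absurd (hf.1.2 u) (not_le.mpr hu)
  · have hvm : v ∈ G.closedNbr u := by
      by_contra hvu
      have : ∑ w ∈ G.closedNbr u, g w = ∑ w ∈ G.closedNbr u, f w := by
        apply Finset.sum_congr rfl
        intro w hw
        rw [hg, Function.update_of_ne]
        rintro rfl; exact hvu hw
      rw [this] at hu
      exact absurd (hf.1.2 u) (not_le.mpr hu)
    have hsum : ∑ w ∈ G.closedNbr u, g w = ∑ w ∈ G.closedNbr u, f w + 2 := by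
      rw [← Finset.add_sum_erase _ g hvm, ← Finset.add_sum_erase _ f hvm, hgv, hv]
      have : ∑ w ∈ (G.closedNbr u).erase v, g w = ∑ w ∈ (G.closedNbr u).erase v, f w := by
        apply Finset.sum_congr rfl
        intro w hw
        rw [hg, Function.update_of_ne (Finset.ne_of_mem_erase hw)]
      rw [this]; ring
    omega

lemma double_count (s t : Finset V) :
    ∑ v ∈ s, (G.neighborFinset v ∩ t).card = ∑ u ∈ t, (G.neighborFinset u ∩ s).card := by
  have key : ∀ (a b : Finset V), ∀ v, (G.neighborFinset v ∩ b).card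
      = ∑ u ∈ b, if G.Adj v u then 1 else 0 := by
    intro a b v
    rw [Finset.inter_comm, ← Finset.filter_mem_eq_inter, Finset.card_filter]
    apply Finset.sum_congr rfl
    intro u _
    simp [SimpleGraph.mem_neighborFinset]
  simp only [key s t, key t s]
  rw [Finset.sum_comm]
  apply Finset.sum_congr rfl; intro u _; apply Finset.sum_congr rfl; intro v _
  simp [G.adj_comm]

end Aux

section Main

variable {V : Type*} [Fintype V] [DecidableEq V] (G : SimpleGraph V) [DecidableRel G.Adj]
  (f : V → ℤ)

lemma inter_filter_univ (s : Finset V) (p : V → Prop) [DecidablePred p] :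
    s ∩ univ.filter p = s.filter p := by
  ext u; simp

lemma claim (hf : G.MaximalNegativeFn f) (A : ℕ → Finset V)
    (hA' : ∀ i, A i = univ.filter (fun v => f v = -1 ∧ dP G f v = i)) :
    (A 0).card ≤ ∑ i ∈ Finset.Icc 1 (G.maxDegree + 1), (i - 1) * (A i).card := by
  classical
  have h1 := hf.1.1
  set W : Finset V := univ.filter (fun u => f u = -1 ∧ G.degree u + 1 ≤ 2 * dP G f u) with hW
  -- step 2: every vertex of A 0 has a neighbor in W
  have step2 : ∀ v ∈ A 0, 1 ≤ (G.neighborFinset v ∩ W).card := by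
    intro v hv
    rw [hA' 0, mem_filter] at hv
    obtain ⟨-, hv1, hv0⟩ := hv
    obtain ⟨u, hu, hsum⟩ := witness G f hf v hv1
    rw [sum_closedNbr_eq G f h1] at hsum
    have hune : u ≠ v := by
      rintro rfl
      rw [hv1, hv0] at hsum
      have : 0 ≤ G.degree u := Nat.zero_le _
      push_cast at hsum
      omega
    have hunb : u ∈ G.neighborFinset v := by
      rcases Finset.mem_insert.mp hu with h | h
      · exact absurd h hune
      · exact h
    have hu1 : f u = -1 := by
      rcases h1 u with h | h
      · exact h
      · exfalso
        have : u ∈ (G.neighborFinset v).filter (fun u => f u = 1) :=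
          mem_filter.mpr ⟨hunb, h⟩
        have := Finset.card_pos.mpr ⟨u, this⟩
        rw [show ((G.neighborFinset v).filter (fun u => f u = 1)).card = dP G f v from rfl,
          hv0] at this
        omega
    have huW : u ∈ W := by
      rw [hW, mem_filter]
      refine ⟨mem_univ u, hu1, ?_⟩
      rw [hu1] at hsum
      have hd := dP_le_degree G f u
      -- hsum : 0 ≤ -1 + 2 * dP - degree (in ℤ)
      have : (G.degree u : ℤ) + 1 ≤ 2 * (dP G f u : ℤ) := by linarith
      exact_mod_cast this
    exact Finset.card_pos.mpr ⟨u, Finset.mem_inter.mpr ⟨hunb, huW⟩⟩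
  -- step 3: double counting
  have step3 : (A 0).card ≤ ∑ u ∈ W, (G.neighborFinset u ∩ A 0).card := by
    calc (A 0).card = ∑ v ∈ A 0, 1 := by simp
    _ ≤ ∑ v ∈ A 0, (G.neighborFinset v ∩ W).card := Finset.sum_le_sum step2
    _ = ∑ u ∈ W, (G.neighborFinset u ∩ A 0).card := double_count G (A 0) W
  -- step 4: bound each term
  have step4 : ∀ u ∈ W, (G.neighborFinset u ∩ A 0).card ≤ dP G f u - 1 := by
    intro u hu
    rw [hW, mem_filter] at hu
    obtain ⟨-, hu1, hu2⟩ := hu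
    have hsub : G.neighborFinset u ∩ A 0 ⊆ (G.neighborFinset u).filter (fun w => f w = -1) := by
      intro w hw
      rw [Finset.mem_inter] at hw
      rw [mem_filter]
      refine ⟨hw.1, ?_⟩
      rw [hA' 0, mem_filter] at hw
      exact hw.2.2.1
    have h4 := card_filter_neg_eq f h1 (G.neighborFinset u)
    have hd := dP_le_degree G f u
    calc (G.neighborFinset u ∩ A 0).card
        ≤ ((G.neighborFinset u).filter (fun w => f w = -1)).card := card_le_card hsub
    _ ≤ dP G f u - 1 := by
        rw [show ((G.neighborFinset u).filter (fun u => f u = 1)).card = dP G f u from rfl] at h4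
        rw [show (G.neighborFinset u).card = G.degree u from rfl] at h4
        omega
  -- step 5: W ⊆ M₁ and fiberwise sum
  set M₁ : Finset V := univ.filter (fun u => f u = -1 ∧ 1 ≤ dP G f u) with hM₁
  have hWM : W ⊆ M₁ := by
    intro u hu
    rw [hW, mem_filter] at hu
    rw [hM₁, mem_filter]
    have hd := dP_le_degree G f u
    exact ⟨mem_univ u, hu.2.1, by omega⟩
  have step5 : ∑ u ∈ W, (dP G f u - 1) ≤ ∑ u ∈ M₁, (dP G f u - 1) :=
    Finset.sum_le_sum_of_subset hWM
  have step6 : ∑ u ∈ M₁, (dP G f u - 1)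
      = ∑ i ∈ Finset.Icc 1 (G.maxDegree + 1), (i - 1) * (A i).card := by
    rw [← Finset.sum_fiberwise_of_maps_to (g := dP G f) (t := Finset.Icc 1 (G.maxDegree + 1))]
    · apply Finset.sum_congr rfl
      intro i hi
      rw [Finset.mem_Icc] at hi
      have : M₁.filter (fun u => dP G f u = i) = A i := by
        rw [hA' i, hM₁]
        ext u
        simp only [mem_filter, mem_univ, true_and, filter_filter]
        constructor
        · rintro ⟨⟨h1', h2'⟩, h3'⟩; exact ⟨h1', h3'⟩
        · rintro ⟨h1', h2'⟩; exact ⟨⟨h1', by omega⟩, h2'⟩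
      have h2 : ∑ u ∈ A i, (dP G f u - 1) = (A i).card * (i - 1) := by
        rw [Finset.sum_congr rfl (fun u hu => by
          rw [hA' i, mem_filter] at hu
          rw [hu.2.2] : ∀ u ∈ A i, dP G f u - 1 = i - 1),
          Finset.sum_const, smul_eq_mul]
      rw [this, h2, mul_comm]
    · intro u hu
      rw [hM₁, mem_filter] at hu
      rw [Finset.mem_Icc]
      refine ⟨hu.2.2, ?_⟩
      have := (dP_le_degree G f u).trans (G.degree_le_maxDegree u)
      omega
  calc (A 0).card ≤ ∑ u ∈ W, (G.neighborFinset u ∩ A 0).card := step3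
  _ ≤ ∑ u ∈ W, (dP G f u - 1) := Finset.sum_le_sum step4
  _ ≤ ∑ u ∈ M₁, (dP G f u - 1) := step5
  _ = _ := step6

end Main

theorem stmt_17 {V : Type*} [Fintype V] [DecidableEq V] (G : SimpleGraph V) [DecidableRel G.Adj]
    (f : V → ℤ) (hf : G.MaximalNegativeFn f)
    (A : ℕ → Finset V)
    (hA : ∀ i, A i = univ.filter
      (fun v => f v = -1 ∧ ((G.neighborFinset v).filter (fun u => f u = 1)).card = i)) :
    Fintype.card V ≤
        (univ.filter (fun v => f v = 1)).card +
          ∑ i ∈ Finset.Icc 1 (G.maxDegree + 1), i * (A i).card ∧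
      (univ.filter (fun v => f v = 1)).card +
          ∑ i ∈ Finset.Icc 1 (G.maxDegree + 1), i * (A i).card ≤
        (univ.filter (fun v => f v = 1)).card * (1 + G.maxDegree) := by
  classical
  have h1 := hf.1.1
  have hA' : ∀ i, A i = univ.filter (fun v => f v = -1 ∧ dP G f v = i) := fun i => hA i
  set P : Finset V := univ.filter (fun v => f v = 1) with hP
  set M : Finset V := univ.filter (fun v => f v = -1) with hM
  set Δ := G.maxDegree with hΔ
  have hMA : ∀ i, M.filter (fun v => dP G f v = i) = A i := by
    intro i; rw [hA' i, hM, filter_filter]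
  have hmaps : ∀ v ∈ M, dP G f v ∈ Finset.range (Δ + 2) := by
    intro v _; rw [Finset.mem_range]
    have := (dP_le_degree G f v).trans (G.degree_le_maxDegree v)
    omega
  have hMcard : M.card = ∑ i ∈ Finset.range (Δ + 2), (A i).card := by
    rw [Finset.card_eq_sum_card_fiberwise hmaps]
    exact Finset.sum_congr rfl (fun i _ => by rw [hMA i])
  have h0notin : (0 : ℕ) ∉ Finset.Icc 1 (Δ + 1) := by simp
  have hsplit : Finset.range (Δ + 2) = insert 0 (Finset.Icc 1 (Δ + 1)) := by
    ext i
    simp only [Finset.mem_range, Finset.mem_insert, Finset.mem_Icc]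
    omega
  have hn : Fintype.card V = M.card + P.card := by
    rw [← Finset.card_univ, ← card_filter_neg_eq f h1 univ]
  have hdecomp : ∑ i ∈ Finset.Icc 1 (Δ + 1), i * (A i).card
      = ∑ i ∈ Finset.Icc 1 (Δ + 1), (i - 1) * (A i).card
        + ∑ i ∈ Finset.Icc 1 (Δ + 1), (A i).card := by
    rw [← Finset.sum_add_distrib]
    apply Finset.sum_congr rfl
    intro i hi
    rw [Finset.mem_Icc] at hi
    obtain ⟨j, rfl⟩ := Nat.exists_eq_add_of_le hi.1
    simp only [Nat.add_sub_cancel_left]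
    ring
  have hclaim := claim G f hf A hA'
  rw [← hΔ] at hclaim
  constructor
  · -- first inequality
    rw [hn, hMcard, hsplit, Finset.sum_insert h0notin]
    omega
  · -- second inequality
    have hS : ∑ i ∈ Finset.Icc 1 (Δ + 1), i * (A i).card = ∑ v ∈ M, dP G f v := by
      rw [← Finset.sum_fiberwise_of_maps_to hmaps (dP G f), hsplit,
        Finset.sum_insert h0notin]
      have hzero : ∑ v ∈ M.filter (fun v => dP G f v = 0), dP G f v = 0 := by
        apply Finset.sum_eq_zero
        intro v hv
        exact (mem_filter.mp hv).2
      rw [hzero, zero_add]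
      apply Finset.sum_congr rfl
      intro i hi
      rw [hMA i]
      rw [Finset.sum_congr rfl (fun v hv => by
        rw [hA' i, mem_filter] at hv
        exact hv.2.2 : ∀ v ∈ A i, dP G f v = i),
        Finset.sum_const, smul_eq_mul, mul_comm]
    have hSP : ∑ v ∈ M, dP G f v ≤ P.card * Δ := by
      have e1 : ∀ v, dP G f v = (G.neighborFinset v ∩ P).card := by
        intro v; rw [hP, inter_filter_univ]; rfl
      calc ∑ v ∈ M, dP G f v = ∑ v ∈ M, (G.neighborFinset v ∩ P).card :=
            Finset.sum_congr rfl (fun v _ => e1 v)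
      _ = ∑ u ∈ P, (G.neighborFinset u ∩ M).card := double_count G M P
      _ ≤ ∑ u ∈ P, G.degree u :=
            Finset.sum_le_sum (fun u _ => card_le_card Finset.inter_subset_left)
      _ ≤ ∑ u ∈ P, Δ := Finset.sum_le_sum (fun u _ => G.degree_le_maxDegree u)
      _ = P.card * Δ := by rw [Finset.sum_const, smul_eq_mul]
    rw [hS, mul_add, mul_one]
    omega
end
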